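/- arXiv:1509.07437 — 10 statements merged into one kernel-verified Lean document; each statement's English description precedes it below -/
import Mathlib

section
/- Let T be a treegadget with root vertex r, and let c : V(T) → {1,2,3} be a proper 3-coloring of T. If k ∈ {1,2,3} is a color such that c(v) ≠ k for every leaf v of T, then c(r) = k. -/
/-- A complete binary tree: every internal node has exactly two children. -/
inductive BTree : Type
  | leaf : BTree
  | node : BTree → BTree → BTree

/-- The subtree of a binary tree located at a given position (a path of
left/right choices from the root), if that position exists in the tree. -/
def BTree.subtree : BTree → List Bool → Option BTree
  | t, [] => some t
  | .leaf, _ :: _ => none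
  | .node l r, b :: p => (if b then r else l).subtree p

/-- Vertices of the treegadget of `t`: a valid node position of the tree
together with one of the three triangle vertices placed at that node
(`0` is the vertex `r_v`, `1` is `x_v`, `2` is `y_v`). -/
def TGVertex (t : BTree) : Type :=
  {v : List Bool × Fin 3 // (t.subtree v.1).isSome}

/-- The treegadget of a complete binary tree `t`: each node of the tree is
replaced by a triangle `r_v, x_v, y_v`, the vertex `x_v` (resp. `y_v`) is
additionally joined to the vertex `r` of the left (resp. right) child of `v`. -/
def treegadget (t : BTree) : SimpleGraph (TGVertex t) :=
  SimpleGraph.fromRel fun v w =>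
    v.1.1 = w.1.1 ∨
    (w.1.1 = v.1.1 ++ [false] ∧ v.1.2 = 1 ∧ w.1.2 = 0) ∨
    (w.1.1 = v.1.1 ++ [true] ∧ v.1.2 = 2 ∧ w.1.2 = 0)

/-- The root of the treegadget: the vertex `r` of the triangle at the root node. -/
def TGroot (t : BTree) : TGVertex t := ⟨([], 0), by cases t <;> rfl⟩

/-- A leaf of the treegadget: a vertex `x_v` where `v` has no left subtree, or a
vertex `y_v` where `v` has no right subtree. Since the binary tree is complete,
these are exactly the vertices `x_v` and `y_v` at childless nodes `v`. -/
def IsTGLeaf (t : BTree) (v : TGVertex t) : Prop :=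
  t.subtree v.1.1 = some BTree.leaf ∧ v.1.2 ≠ 0


lemma BTree.subtree_append (q : List Bool) : ∀ (t : BTree) (p : List Bool),
    t.subtree (p ++ q) = (t.subtree p).bind (·.subtree q) := by
  intro t p
  induction p generalizing t with
  | nil => simp [BTree.subtree]
  | cons b p ih =>
    cases t with
    | leaf => simp [BTree.subtree]
    | node l r => simp [BTree.subtree, ih]

lemma fin3_aux (a b d k : Fin 3) (h1 : a ≠ b) (h2 : a ≠ d) (h3 : b ≠ d)
    (hb : b ≠ k) (hd : d ≠ k) : a = k := by
  revert a b d k; decide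

theorem treegadget_color_of_no_leaf_color (t : BTree) (c : TGVertex t → Fin 3)
    (hc : ∀ v w, (treegadget t).Adj v w → c v ≠ c w)
    (k : Fin 3) (hk : ∀ v, IsTGLeaf t v → c v ≠ k) :
    c (TGroot t) = k := by
  -- helper to build vertices
  have key : ∀ (s : BTree) (p : List Bool) (hp : t.subtree p = some s),
      c ⟨(p, 0), by rw [hp]; rfl⟩ = k := by
    intro s
    induction s with
    | leaf =>
      intro p hp
      have hs : (t.subtree p).isSome := by rw [hp]; rfl
      have adj : ∀ i j : Fin 3, i ≠ j →
          (treegadget t).Adj ⟨(p, i), hs⟩ ⟨(p, j), hs⟩ := by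
        intro i j hij
        refine ⟨?_, Or.inl (Or.inl rfl)⟩
        exact fun h => hij (congrArg (fun v : TGVertex t => v.1.2) h)
      have hx : c ⟨(p, 1), hs⟩ ≠ k := hk _ ⟨hp, fun h => by simp at h⟩
      have hy : c ⟨(p, 2), hs⟩ ≠ k := hk _ ⟨hp, fun h => by simp at h⟩
      exact fin3_aux _ _ _ _ (hc _ _ (adj 0 1 (by decide)))
        (hc _ _ (adj 0 2 (by decide))) (hc _ _ (adj 1 2 (by decide))) hx hy
    | node l r ihl ihr =>
      intro p hp
      have hs : (t.subtree p).isSome := by rw [hp]; rfl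
      have hpl : t.subtree (p ++ [false]) = some l := by
        rw [BTree.subtree_append, hp]; simp [BTree.subtree]
      have hpr : t.subtree (p ++ [true]) = some r := by
        rw [BTree.subtree_append, hp]; simp [BTree.subtree]
      have hsl : (t.subtree (p ++ [false])).isSome := by rw [hpl]; rfl
      have hsr : (t.subtree (p ++ [true])).isSome := by rw [hpr]; rfl
      have hcl : c ⟨(p ++ [false], 0), hsl⟩ = k := ihl _ hpl
      have hcr : c ⟨(p ++ [true], 0), hsr⟩ = k := ihr _ hpr
      have hne : ∀ b : Bool, p ≠ p ++ [b] := by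
        intro b h
        have := congrArg List.length h
        simp at this
      have adjl : (treegadget t).Adj ⟨(p, 1), hs⟩ ⟨(p ++ [false], 0), hsl⟩ := by
        refine ⟨?_, Or.inl (Or.inr (Or.inl ⟨rfl, rfl, rfl⟩))⟩
        exact fun h => hne false (congrArg (fun v : TGVertex t => v.1.1) h)
      have adjr : (treegadget t).Adj ⟨(p, 2), hs⟩ ⟨(p ++ [true], 0), hsr⟩ := by
        refine ⟨?_, Or.inl (Or.inr (Or.inr ⟨rfl, rfl, rfl⟩))⟩
        exact fun h => hne true (congrArg (fun v : TGVertex t => v.1.1) h)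
      have hx : c ⟨(p, 1), hs⟩ ≠ k := by
        rw [← hcl]; exact hc _ _ adjl
      have hy : c ⟨(p, 2), hs⟩ ≠ k := by
        rw [← hcr]; exact hc _ _ adjr
      have adj : ∀ i j : Fin 3, i ≠ j →
          (treegadget t).Adj ⟨(p, i), hs⟩ ⟨(p, j), hs⟩ := by
        intro i j hij
        refine ⟨?_, Or.inl (Or.inl rfl)⟩
        exact fun h => hij (congrArg (fun v : TGVertex t => v.1.2) h)
      exact fin3_aux _ _ _ _ (hc _ _ (adj 0 1 (by decide)))
        (hc _ _ (adj 0 2 (by decide))) (hc _ _ (adj 1 2 (by decide))) hx hy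
  exact key t [] (by cases t <;> rfl)
end

section
/- Let T be a treegadget with leaf set L ⊆ V(T) and root r. Every 3-coloring c' : L → {1,2,3} that is proper on the induced subgraph T[L] can be extended to a proper 3-coloring c of all of T. Moreover, if there is a leaf v ∈ L with c'(v) = i, then such an extension exists that additionally satisfies c(r) ≠ i. -/
/-!
Induct on the tree, proving only the second claim (the first follows by forbidding the colour
of any leaf). A leaf node is a single triangle whose two leaves carry distinct colours, so the
third colour goes to the root. At an internal node, colour both subgadgets by induction, with the
forbidden colour `i` kept off the root of the subgadget containing a leaf of colour `i`. The root
triangle must then avoid the root colours `a, b` of the two subgadgets at `x, y` and avoid `i` at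
the root; since `a ≠ i` or `b ≠ i`, a permutation of the three colours does this.
-/

open Function

theorem Fin.exists_injective_three_of_ne (a b : Fin 3) (hab : a ≠ b) :
    ∃ f : Fin 3 → Fin 3, Injective f ∧ f 1 = a ∧ f 2 = b := by
  revert a b; decide

theorem Fin.exists_injective_three_avoiding (i a b : Fin 3) (h : a ≠ i ∨ b ≠ i) :
    ∃ f : Fin 3 → Fin 3, Injective f ∧ f 1 ≠ a ∧ f 2 ≠ b ∧ f 0 ≠ i := by
  revert i a b; decide

/-- The relation generating the edges of `treegadget`. -/
def TGLink (p q : List Bool × Fin 3) : Prop :=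
  p.1 = q.1 ∨ (q.1 = p.1 ++ [false] ∧ p.2 = 1 ∧ q.2 = 0) ∨
    (q.1 = p.1 ++ [true] ∧ p.2 = 2 ∧ q.2 = 0)

theorem tgLink_cons_cons {b b' : Bool} {p q : List Bool} {k k' : Fin 3} :
    TGLink (b :: p, k) (b' :: q, k') ↔ b = b' ∧ TGLink (p, k) (q, k') := by
  simp only [TGLink, List.cons_append, List.cons.injEq]
  grind

theorem tgLink_nil_cons {b : Bool} {q : List Bool} {k k' : Fin 3} :
    TGLink ([], k) (b :: q, k') ↔ q = [] ∧ (b = false ∧ k = 1 ∨ b = true ∧ k = 2) ∧ k' = 0 := by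
  simp only [TGLink, List.nil_append, List.cons.injEq]
  grind

theorem not_tgLink_cons_nil {b : Bool} {p : List Bool} {k k' : Fin 3} :
    ¬ TGLink (b :: p, k) ([], k') := by
  simp [TGLink]

section Coloring

variable {α : Type*} {t : BTree}

def IsProperTGColoring (t : BTree) (c : TGVertex t → α) : Prop :=
  ∀ v w, (treegadget t).Adj v w → c v ≠ c w

def IsProperOnTGLeaves (t : BTree) (c : TGVertex t → α) : Prop :=
  ∀ v w, IsTGLeaf t v → IsTGLeaf t w → (treegadget t).Adj v w → c v ≠ c w

def AgreeOnTGLeaves (t : BTree) (c c' : TGVertex t → α) : Prop :=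
  ∀ v, IsTGLeaf t v → c v = c' v

theorem treegadget_adj_iff {v w : TGVertex t} :
    (treegadget t).Adj v w ↔ v.1 ≠ w.1 ∧ (TGLink v.1 w.1 ∨ TGLink w.1 v.1) := by
  rw [treegadget, SimpleGraph.fromRel_adj, Ne, show v = w ↔ v.1 = w.1 from Subtype.ext_iff]
  rfl

theorem isProperTGColoring_of_tgLink {c : TGVertex t → α}
    (h : ∀ v w, v.1 ≠ w.1 → TGLink v.1 w.1 → c v ≠ c w) : IsProperTGColoring t c := by
  intro v w hvw
  obtain ⟨hne, hlink | hlink⟩ := treegadget_adj_iff.1 hvw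
  · exact h v w hne hlink
  · exact (h w v hne.symm hlink).symm

end Coloring

namespace TGVertex

variable {l r : BTree}

def ofLeft (r : BTree) (v : TGVertex l) : TGVertex (.node l r) := ⟨(false :: v.1.1, v.1.2), v.2⟩

def ofRight (l : BTree) (v : TGVertex r) : TGVertex (.node l r) := ⟨(true :: v.1.1, v.1.2), v.2⟩

theorem path_eq_nil (v : TGVertex .leaf) : v.1.1 = [] := by
  obtain ⟨⟨_ | _, _⟩, hv⟩ := v
  · rfl
  · simp [BTree.subtree] at hv

theorem eq_of_label_eq {v w : TGVertex .leaf} (h : v.1.2 = w.1.2) : v = w :=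
  Subtype.ext (Prod.ext (by rw [path_eq_nil, path_eq_nil]) h)

theorem adj_ofLeft {v w : TGVertex l} (h : (treegadget l).Adj v w) :
    (treegadget (.node l r)).Adj (ofLeft r v) (ofLeft r w) := by
  rw [treegadget_adj_iff] at h ⊢
  simpa [ofLeft, Prod.ext_iff, tgLink_cons_cons] using h

theorem adj_ofRight {v w : TGVertex r} (h : (treegadget r).Adj v w) :
    (treegadget (.node l r)).Adj (ofRight l v) (ofRight l w) := by
  rw [treegadget_adj_iff] at h ⊢
  simpa [ofRight, Prod.ext_iff, tgLink_cons_cons] using h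

end TGVertex

open TGVertex

theorem exists_isTGLeaf : ∀ t : BTree, ∃ v, IsTGLeaf t v
  | .leaf => ⟨⟨([], 1), rfl⟩, rfl, by decide⟩
  | .node l _ => let ⟨v, hv⟩ := exists_isTGLeaf l; ⟨ofLeft _ v, hv⟩

section Glue

variable {α : Type*} {l r : BTree}

def glueColorings (tri : Fin 3 → α) (cl : TGVertex l → α) (cr : TGVertex r → α) :
    TGVertex (.node l r) → α
  | ⟨([], k), _⟩ => tri k
  | ⟨(false :: p, k), h⟩ => cl ⟨(p, k), h⟩
  | ⟨(true :: p, k), h⟩ => cr ⟨(p, k), h⟩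

theorem isProperTGColoring_glueColorings {tri : Fin 3 → α} {cl : TGVertex l → α}
    {cr : TGVertex r → α} (htri : Injective tri) (hl : IsProperTGColoring l cl)
    (hr : IsProperTGColoring r cr) (hx : tri 1 ≠ cl (TGroot l)) (hy : tri 2 ≠ cr (TGroot r)) :
    IsProperTGColoring (.node l r) (glueColorings tri cl cr) := by
  refine isProperTGColoring_of_tgLink fun v w hne hvw => ?_
  rcases v with ⟨⟨_ | ⟨b, p⟩, k⟩, hv⟩ <;> rcases w with ⟨⟨_ | ⟨b', q⟩, k'⟩, hw⟩
  · exact htri.ne (by simpa using hne)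
  · obtain ⟨rfl, hb, rfl⟩ := tgLink_nil_cons.1 hvw
    rcases hb with ⟨rfl, rfl⟩ | ⟨rfl, rfl⟩
    exacts [hx, hy]
  · exact absurd hvw not_tgLink_cons_nil
  · obtain ⟨rfl, hpq⟩ := tgLink_cons_cons.1 hvw
    have hne' : (p, k) ≠ (q, k') := by simpa [Prod.ext_iff] using hne
    cases b
    · exact hl ⟨(p, k), hv⟩ ⟨(q, k'), hw⟩ (treegadget_adj_iff.2 ⟨hne', .inl hpq⟩)
    · exact hr ⟨(p, k), hv⟩ ⟨(q, k'), hw⟩ (treegadget_adj_iff.2 ⟨hne', .inl hpq⟩)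

theorem agreeOnTGLeaves_glueColorings {tri : Fin 3 → α} {cl : TGVertex l → α}
    {cr : TGVertex r → α} {c' : TGVertex (.node l r) → α}
    (hl : AgreeOnTGLeaves l cl (c' ∘ ofLeft r)) (hr : AgreeOnTGLeaves r cr (c' ∘ ofRight l)) :
    AgreeOnTGLeaves (.node l r) (glueColorings tri cl cr) c' := by
  rintro ⟨⟨_ | ⟨_ | _, p⟩, k⟩, h⟩ hleaf
  · simp [IsTGLeaf, BTree.subtree] at hleaf
  · exact hl ⟨(p, k), h⟩ hleaf
  · exact hr ⟨(p, k), h⟩ hleaf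

end Glue

theorem exists_extension_leaf (c' : TGVertex .leaf → Fin 3) (hc' : IsProperOnTGLeaves .leaf c')
    (i : Fin 3) (hi : ∃ v, IsTGLeaf .leaf v ∧ c' v = i) :
    ∃ c, IsProperTGColoring .leaf c ∧ AgreeOnTGLeaves .leaf c c' ∧ c (TGroot .leaf) ≠ i := by
  let x : TGVertex .leaf := ⟨([], 1), rfl⟩
  let y : TGVertex .leaf := ⟨([], 2), rfl⟩
  have hxy : c' x ≠ c' y :=
    hc' x y ⟨rfl, by decide⟩ ⟨rfl, by decide⟩ (treegadget_adj_iff.2 ⟨by decide, .inl (.inl rfl)⟩)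
  obtain ⟨tri, htri, hx, hy⟩ := Fin.exists_injective_three_of_ne _ _ hxy
  have hagree : AgreeOnTGLeaves .leaf (fun v => tri v.1.2) c' := by
    rintro v ⟨-, hk⟩
    obtain hv | hv : v.1.2 = 1 ∨ v.1.2 = 2 := by omega
    · rw [eq_of_label_eq (w := x) hv]; exact hx
    · rw [eq_of_label_eq (w := y) hv]; exact hy
  refine ⟨fun v => tri v.1.2, fun v w hvw => htri.ne fun h => hvw.ne (eq_of_label_eq h), hagree, ?_⟩
  obtain ⟨v, hv, rfl⟩ := hi
  rw [← hagree v hv]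
  exact htri.ne (Ne.symm hv.2)

theorem exists_extension_node {l r : BTree} (c' : TGVertex (.node l r) → Fin 3) (i : Fin 3)
    {cl : TGVertex l → Fin 3} (hcl : IsProperTGColoring l cl)
    (hcl' : AgreeOnTGLeaves l cl (c' ∘ ofLeft r)) {cr : TGVertex r → Fin 3}
    (hcr : IsProperTGColoring r cr) (hcr' : AgreeOnTGLeaves r cr (c' ∘ ofRight l))
    (hi : cl (TGroot l) ≠ i ∨ cr (TGroot r) ≠ i) :
    ∃ c, IsProperTGColoring (.node l r) c ∧ AgreeOnTGLeaves (.node l r) c c' ∧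
      c (TGroot (.node l r)) ≠ i := by
  obtain ⟨tri, htri, hx, hy, h0⟩ := Fin.exists_injective_three_avoiding i _ _ hi
  exact ⟨glueColorings tri cl cr, isProperTGColoring_glueColorings htri hcl hcr hx hy,
    agreeOnTGLeaves_glueColorings hcl' hcr', h0⟩

theorem exists_extension_root_ne (t : BTree) (c' : TGVertex t → Fin 3)
    (hc' : IsProperOnTGLeaves t c') (i : Fin 3) (hi : ∃ v, IsTGLeaf t v ∧ c' v = i) :
    ∃ c, IsProperTGColoring t c ∧ AgreeOnTGLeaves t c c' ∧ c (TGroot t) ≠ i := by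
  induction t generalizing i with
  | leaf => exact exists_extension_leaf c' hc' i hi
  | node l r ihl ihr =>
    have hl : IsProperOnTGLeaves l (c' ∘ ofLeft r) := fun v w hv hw hvw =>
      hc' _ _ hv hw (adj_ofLeft hvw)
    have hr : IsProperOnTGLeaves r (c' ∘ ofRight l) := fun v w hv hw hvw =>
      hc' _ _ hv hw (adj_ofRight hvw)
    obtain ⟨⟨⟨_ | ⟨_ | _, p⟩, k⟩, h⟩, hleaf, rfl⟩ := hi
    · simp [IsTGLeaf, BTree.subtree] at hleaf
    · obtain ⟨cl, hcl, hcl', hroot⟩ := ihl _ hl _ ⟨⟨(p, k), h⟩, hleaf, rfl⟩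
      obtain ⟨v, hv⟩ := exists_isTGLeaf r
      obtain ⟨cr, hcr, hcr', -⟩ := ihr _ hr _ ⟨v, hv, rfl⟩
      exact exists_extension_node c' _ hcl hcl' hcr hcr' (.inl hroot)
    · obtain ⟨v, hv⟩ := exists_isTGLeaf l
      obtain ⟨cl, hcl, hcl', -⟩ := ihl _ hl _ ⟨v, hv, rfl⟩
      obtain ⟨cr, hcr, hcr', hroot⟩ := ihr _ hr _ ⟨⟨(p, k), h⟩, hleaf, rfl⟩
      exact exists_extension_node c' _ hcl hcl' hcr hcr' (.inr hroot)

theorem treegadget_extend_leaf_coloring (t : BTree) (c' : TGVertex t → Fin 3)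
    (hc' : ∀ v w, IsTGLeaf t v → IsTGLeaf t w → (treegadget t).Adj v w → c' v ≠ c' w) :
    (∃ c : TGVertex t → Fin 3,
        (∀ v w, (treegadget t).Adj v w → c v ≠ c w) ∧
        (∀ v, IsTGLeaf t v → c v = c' v)) ∧
    (∀ i : Fin 3, (∃ v, IsTGLeaf t v ∧ c' v = i) →
      ∃ c : TGVertex t → Fin 3,
        (∀ v w, (treegadget t).Adj v w → c v ≠ c w) ∧
        (∀ v, IsTGLeaf t v → c v = c' v) ∧
        c (TGroot t) ≠ i) := by
  refine ⟨?_, exists_extension_root_ne t c' hc'⟩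
  obtain ⟨v, hv⟩ := exists_isTGLeaf t
  obtain ⟨c, hc, hagree, -⟩ := exists_extension_root_ne t c' hc' (c' v) ⟨v, hv, rfl⟩
  exact ⟨c, hc, hagree⟩
end

section
/- Let G be a connected finite simple graph on n ≥ 3 vertices and let k ≥ 1. Then G has a connected dominating set of size at most k if and only if G has a spanning tree with at least n − k leaves. -/
/-!
If `D` is a connected dominating set, keep the edges of `G` inside `D` and attach every other
vertex to a single neighbour in `D`. This graph is connected, and in any of its spanning trees
every vertex outside `D` is a leaf.

Conversely, deleting the leaves of a spanning tree `T` keeps it connected, and as there are at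
least three vertices no two leaves of `T` are adjacent; hence the non-leaves of `T` form a
connected dominating set.
-/

namespace SimpleGraph

variable {V : Type*} {G : SimpleGraph V}

lemma Preconnected.neighborSet_nonempty [Nontrivial V] (hG : G.Preconnected) (v : V) :
    (G.neighborSet v).Nonempty := by
  simpa [IsIsolated] using hG.not_isIsolated v

lemma Preconnected.ncard_neighborSet_eq_one_iff [Nontrivial V] (hG : G.Preconnected) (v : V) :
    (G.neighborSet v).ncard = 1 ↔ (G.neighborSet v).Subsingleton := by
  rw [Set.ncard_eq_one, Set.subsingleton_iff_eq_empty_or_singleton,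
    or_iff_right (hG.neighborSet_nonempty v).ne_empty]

lemma Preconnected.eq_or_eq_of_adj_of_subsingleton (hG : G.Preconnected) {u v : V}
    (huv : G.Adj u v) (hu : (G.neighborSet u).Subsingleton)
    (hv : (G.neighborSet v).Subsingleton) (w : V) : w = u ∨ w = v := by
  by_contra! hw
  obtain ⟨p, hp⟩ := hG.exists_isPath u w
  -- a path from `u` to `w` starts with the edge to `v`, but trails avoid leaves except at their ends
  have hsnd : p.snd = v := hu (p.adj_snd (Walk.not_nil_of_ne hw.1.symm)) huv
  exact hp.isTrail.not_mem_support_of_subsingleton_neighborSet huv.ne.symm hw.2.symm hv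
    (hsnd ▸ p.getVert_mem_support 1)

lemma Preconnected.not_subsingleton_of_adj_of_subsingleton (hG : G.Preconnected)
    (hV : 2 < Nat.card V) {u v : V} (huv : G.Adj u v) (hu : (G.neighborSet u).Subsingleton) :
    ¬ (G.neighborSet v).Subsingleton := by
  intro hv
  have huniv : (Set.univ : Set V) ⊆ {u, v} := fun w _ ↦
    hG.eq_or_eq_of_adj_of_subsingleton huv hu hv w
  have := Set.ncard_le_ncard huniv
  rw [Set.ncard_univ, Set.ncard_pair huv.ne] at this
  omega

lemma Preconnected.exists_adj_not_subsingleton [Finite V] (hG : G.Preconnected)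
    (hV : 2 < Nat.card V) {v : V} (hv : (G.neighborSet v).Subsingleton) :
    ∃ u, ¬ (G.neighborSet u).Subsingleton ∧ G.Adj v u := by
  have : Nontrivial V := Finite.one_lt_card_iff_nontrivial.1 (by omega)
  obtain ⟨u, hu⟩ := hG.neighborSet_nonempty v
  exact ⟨u, hG.not_subsingleton_of_adj_of_subsingleton hV hu hv, hu⟩

lemma Connected.of_induce_of_forall_adj {D : Set V} (hD : (G.induce D).Connected)
    (hdom : ∀ v ∉ D, ∃ u ∈ D, G.Adj v u) : G.Connected := by
  have hreach : ∀ v, ∃ u ∈ D, G.Reachable u v := fun v ↦ by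
    by_cases hv : v ∈ D
    · exact ⟨v, hv, .rfl⟩
    · obtain ⟨u, hu, hvu⟩ := hdom v hv
      exact ⟨u, hu, hvu.symm.reachable⟩
  obtain ⟨⟨d, hd⟩⟩ := hD.nonempty
  refine (connected_iff_exists_forall_reachable G).2 ⟨d, fun v ↦ ?_⟩
  obtain ⟨u, hu, huv⟩ := hreach v
  exact ((hD ⟨d, hd⟩ ⟨u, hu⟩).map (Embedding.induce D).toHom).trans huv

def pendantGraph (G : SimpleGraph V) (D : Set V) (f : V → V) : SimpleGraph V :=
  fromRel fun x y ↦ G.Adj x y ∧ (x ∈ D ∧ y ∈ D ∨ x ∉ D ∧ y = f x)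

variable {D : Set V} {f : V → V}

lemma pendantGraph_le : pendantGraph G D f ≤ G := by
  rintro x y ⟨-, ⟨hxy, -⟩ | ⟨hyx, -⟩⟩
  exacts [hxy, hyx.symm]

lemma induce_le_induce_pendantGraph : G.induce D ≤ (pendantGraph G D f).induce D := by
  rintro ⟨x, hx⟩ ⟨y, hy⟩ (hxy : G.Adj x y)
  exact ⟨hxy.ne, .inl ⟨hxy, .inl ⟨hx, hy⟩⟩⟩

lemma neighborSet_pendantGraph_subset (hf : ∀ v ∉ D, f v ∈ D) {v : V} (hv : v ∉ D) :
    (pendantGraph G D f).neighborSet v ⊆ {f v} := by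
  rintro w ⟨-, ⟨-, ⟨hvD, -⟩ | ⟨-, rfl⟩⟩ | ⟨-, ⟨-, hvD⟩ | ⟨hwD, rfl⟩⟩⟩
  exacts [(hv hvD).elim, rfl, (hv hvD).elim, (hv (hf w hwD)).elim]

lemma connected_pendantGraph (hD : (G.induce D).Connected)
    (hf : ∀ v ∉ D, f v ∈ D ∧ G.Adj v (f v)) : (pendantGraph G D f).Connected :=
  (hD.mono induce_le_induce_pendantGraph).of_induce_of_forall_adj fun v hv ↦
    ⟨f v, (hf v hv).1, (hf v hv).2.ne, .inl ⟨(hf v hv).2, .inr ⟨hv, rfl⟩⟩⟩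

lemma exists_isTree_le_forall_notMem_subsingleton (hD : (G.induce D).Connected)
    (hdom : ∀ v ∉ D, ∃ u ∈ D, G.Adj v u) :
    ∃ T ≤ G, T.IsTree ∧ ∀ v ∉ D, (T.neighborSet v).Subsingleton := by
  choose! f hf using hdom
  obtain ⟨T, hTle, hT⟩ := (connected_pendantGraph hD hf).exists_isTree_le
  refine ⟨T, hTle.trans pendantGraph_le, hT, fun v hv ↦ ?_⟩
  exact Set.subsingleton_singleton.anti <|
    (neighborSet_mono hTle v).trans (neighborSet_pendantGraph_subset (fun w hw ↦ (hf w hw).1) hv)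

end SimpleGraph

theorem connectedDominatingSet_iff_spanningTree_leaves_general {V : Type} [Fintype V]
    (G : SimpleGraph V) (n k : ℕ)
    (hn : Fintype.card V = n) (hn3 : 3 ≤ n) :
    (∃ D : Set V, D.Nonempty ∧ D.ncard ≤ k ∧ (G.induce D).Connected ∧
        ∀ v ∉ D, ∃ u ∈ D, G.Adj v u) ↔
    (∃ T : SimpleGraph V, T ≤ G ∧ T.IsTree ∧
        n - k ≤ {v : V | (T.neighborSet v).ncard = 1}.ncard) := by
  have hV : 2 < Nat.card V := by rw [Nat.card_eq_fintype_card]; omega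
  have : Nontrivial V := Fintype.one_lt_card_iff_nontrivial.1 (by omega)
  have hcompl (s : Set V) : sᶜ.ncard = n - s.ncard := by
    rw [Set.ncard_compl, Nat.card_eq_fintype_card, hn]
  constructor
  · rintro ⟨D, -, hDk, hD, hdom⟩
    obtain ⟨T, hTG, hT, hleaf⟩ := SimpleGraph.exists_isTree_le_forall_notMem_subsingleton hD hdom
    refine ⟨T, hTG, hT, ?_⟩
    calc n - k ≤ Dᶜ.ncard := by rw [hcompl]; omega
      _ ≤ _ := Set.ncard_le_ncard fun v hv ↦
        (hT.connected.preconnected.ncard_neighborSet_eq_one_iff v).2 (hleaf v hv)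
  · rintro ⟨T, hTG, hT, hleaves⟩
    have hT := hT.connected.preconnected
    set I := {v | ¬ (T.neighborSet v).Subsingleton}
    have hIc : {v | (T.neighborSet v).ncard = 1} = Iᶜ :=
      Set.ext fun v ↦ (hT.ncard_neighborSet_eq_one_iff v).trans not_not.symm
    have hdom (v : V) (hv : v ∉ I) : ∃ u ∈ I, G.Adj v u := by
      obtain ⟨u, hu, hvu⟩ := hT.exists_adj_not_subsingleton hV (not_not.1 hv)
      exact ⟨u, hu, hTG hvu⟩
    have hI : I.Nonempty := by
      obtain ⟨v⟩ := ‹Nontrivial V›.to_nonempty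
      by_cases hv : v ∈ I
      exacts [⟨v, hv⟩, (hdom v hv).imp fun u hu ↦ hu.1]
    refine ⟨I, hI, ?_, ?_, hdom⟩
    · rw [hIc] at hleaves
      have := hcompl Iᶜ
      rw [compl_compl] at this
      omega
    · have : Nonempty I := hI.to_subtype
      exact .mk <| (hT.induce_of_degree_eq_one fun v hv ↦ not_not.1 hv).mono
        (SimpleGraph.comap_monotone _ hTG)

theorem connectedDominatingSet_iff_spanningTree_leaves {V : Type} [Fintype V]
    (G : SimpleGraph V) (hG : G.Connected) (n k : ℕ)
    (hn : Fintype.card V = n) (hn3 : 3 ≤ n) (hk : 1 ≤ k) :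
    (∃ D : Set V, D.Nonempty ∧ D.ncard ≤ k ∧ (G.induce D).Connected ∧
        ∀ v ∉ D, ∃ u ∈ D, G.Adj v u) ↔
    (∃ T : SimpleGraph V, T ≤ G ∧ T.IsTree ∧
        n - k ≤ {v : V | (T.neighborSet v).ncard = 1}.ncard) :=
  connectedDominatingSet_iff_spanningTree_leaves_general G n k hn hn3
end

section
/- (Lovász) Let r ≥ 1, let H be an r-uniform hypergraph on a finite vertex set V(H) with hyperedges E_1, …, E_m, and let α_1, …, α_m be real numbers such that for every (r−1)-element subset A of V(H) one has Σ_{i : A ⊆ E_i} α_i = 0. Then for every partition {V_1, V_2} of V(H) into two parts, Σ_{i : E_i ⊆ V_1} α_i = (−1)^r · Σ_{i : E_i ⊆ V_2} α_i. -/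
open Finset

private lemma lovasz_key {V : Type} [Fintype V] [DecidableEq V] (r m : ℕ)
    (E : Fin m → Finset V) (hE : ∀ i, (E i).card = r)
    (α : Fin m → ℝ)
    (hα : ∀ A : Finset V, A.card = r - 1 →
      ∑ i ∈ Finset.univ.filter (fun i => A ⊆ E i), α i = 0) :
    ∀ n : ℕ, ∀ A : Finset V, A.card + n = r - 1 →
      ∑ i ∈ Finset.univ.filter (fun i => A ⊆ E i), α i = 0 := by
  intro n
  induction n with
  | zero => intro A hA; exact hα A (by omega)
  | succ n ih =>
    intro A hA
    have hAr : A.card < r := by omega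
    have hsum : ∀ v ∈ Aᶜ, ∑ i ∈ Finset.univ.filter (fun i => insert v A ⊆ E i), α i = 0 := by
      intro v hv
      have hv' : v ∉ A := by simpa using hv
      exact ih (insert v A) (by rw [card_insert_of_notMem hv']; omega)
    have h0 : (0 : ℝ) = ∑ v ∈ Aᶜ, ∑ i ∈ Finset.univ.filter (fun i => insert v A ⊆ E i), α i := by
      rw [Finset.sum_congr rfl hsum]; simp
    -- rewrite double sum
    have hswap : ∑ v ∈ Aᶜ, ∑ i ∈ Finset.univ.filter (fun i => insert v A ⊆ E i), α i
        = ∑ i ∈ Finset.univ.filter (fun i => A ⊆ E i), ((r - A.card : ℕ) : ℝ) * α i := by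
      rw [Finset.sum_comm' (s' := fun i => Aᶜ.filter (fun v => insert v A ⊆ E i))
        (t' := Finset.univ) (fun v i => by
          simp [Finset.insert_subset_iff])]
      rw [Finset.sum_filter]
      refine Finset.sum_congr rfl fun i _ => ?_
      by_cases hAE : A ⊆ E i
      · rw [if_pos hAE, Finset.sum_const]
        have hs : Aᶜ.filter (fun v => insert v A ⊆ E i) = E i \ A := by
          ext v
          simp only [Finset.mem_filter, Finset.mem_compl, Finset.insert_subset_iff,
            Finset.mem_sdiff]
          tauto
        rw [hs, card_sdiff_of_subset hAE, hE i, nsmul_eq_mul]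
      · rw [if_neg hAE]
        have hs : Aᶜ.filter (fun v => insert v A ⊆ E i) = ∅ := by
          refine Finset.filter_false_of_mem fun v _ hc => ?_
          exact hAE ((Finset.insert_subset_iff.mp hc).2)
        rw [hs, Finset.sum_empty]
    rw [hswap, ← Finset.mul_sum] at h0
    have hne : ((r - A.card : ℕ) : ℝ) ≠ 0 := by
      have : 0 < r - A.card := by omega
      positivity
    exact (mul_eq_zero.mp h0.symm).resolve_left hne

/-- Lovász's lemma: if real coefficients `α i` attached to the hyperedges of an
`r`-uniform hypergraph sum to zero over every `(r-1)`-element vertex subset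
(summing over the hyperedges containing that subset), then for every partition
of the vertex set into two parts `V₁, V₂`, the sum of the coefficients of the
hyperedges inside `V₁` equals `(-1) ^ r` times the corresponding sum for `V₂`. -/
theorem lovasz_uniform_hypergraph_partition_sum {V : Type} [Fintype V]
    [DecidableEq V] (r m : ℕ) (hr : 1 ≤ r)
    (E : Fin m → Finset V) (hE : ∀ i, (E i).card = r)
    (α : Fin m → ℝ)
    (hα : ∀ A : Finset V, A.card = r - 1 →
      ∑ i ∈ Finset.univ.filter (fun i => A ⊆ E i), α i = 0)
    (V₁ V₂ : Finset V) (hdisj : Disjoint V₁ V₂) (hunion : V₁ ∪ V₂ = Finset.univ) :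
    ∑ i ∈ Finset.univ.filter (fun i => E i ⊆ V₁), α i =
      (-1 : ℝ) ^ r * ∑ i ∈ Finset.univ.filter (fun i => E i ⊆ V₂), α i := by
  have key := lovasz_key r m E hE α hα
  -- E i ⊆ V₁ ↔ E i ∩ V₂ = ∅
  have hV1 : ∀ S : Finset V, S ⊆ V₁ ↔ S ∩ V₂ = ∅ := by
    intro S
    constructor
    · intro h
      rw [← Finset.disjoint_iff_inter_eq_empty]
      exact hdisj.mono_left h
    · intro h
      intro x hx
      have hx' : x ∈ V₁ ∪ V₂ := by rw [hunion]; exact Finset.mem_univ x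
      rcases Finset.mem_union.mp hx' with h1 | h2
      · exact h1
      · exact absurd (Finset.mem_inter.mpr ⟨hx, h2⟩) (by simp [h])
  -- powerset sum identity over ℝ
  have hpow : ∀ S : Finset V, (∑ A ∈ S.powerset, (-1 : ℝ) ^ A.card)
      = if S = ∅ then 1 else 0 := by
    intro S
    have := Finset.sum_powerset_neg_one_pow_card (x := S)
    calc (∑ A ∈ S.powerset, (-1 : ℝ) ^ A.card)
        = ((∑ A ∈ S.powerset, (-1 : ℤ) ^ A.card : ℤ) : ℝ) := by push_cast; ring_nf
      _ = _ := by rw [this]; split <;> simp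
  calc ∑ i ∈ Finset.univ.filter (fun i => E i ⊆ V₁), α i
      = ∑ i ∈ Finset.univ, (if E i ∩ V₂ = ∅ then 1 else 0 : ℝ) * α i := by
        rw [Finset.sum_filter]
        refine Finset.sum_congr rfl fun i _ => ?_
        by_cases h : E i ⊆ V₁
        · rw [if_pos h, if_pos ((hV1 (E i)).mp h), one_mul]
        · rw [if_neg h, if_neg (fun hc => h ((hV1 (E i)).mpr hc)), zero_mul]
    _ = ∑ i ∈ Finset.univ, ∑ A ∈ (E i ∩ V₂).powerset, (-1 : ℝ) ^ A.card * α i := by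
        refine Finset.sum_congr rfl fun i _ => ?_
        rw [← Finset.sum_mul, hpow]
    _ = ∑ i ∈ Finset.univ, ∑ A ∈ V₂.powerset.filter (fun A => A ⊆ E i),
          (-1 : ℝ) ^ A.card * α i := by
        refine Finset.sum_congr rfl fun i _ => ?_
        refine Finset.sum_congr ?_ fun _ _ => rfl
        ext A
        simp only [Finset.mem_powerset, Finset.mem_filter, Finset.subset_inter_iff]
        tauto
    _ = ∑ A ∈ V₂.powerset, (-1 : ℝ) ^ A.card *
          ∑ i ∈ Finset.univ.filter (fun i => A ⊆ E i), α i := by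
        rw [Finset.sum_comm' (s' := fun A => Finset.univ.filter (fun i => A ⊆ E i))
          (t' := V₂.powerset)]
        · refine Finset.sum_congr rfl fun A _ => ?_
          rw [Finset.mul_sum]
        · intro i A
          simp only [Finset.mem_filter, Finset.mem_univ, true_and, and_comm]
    _ = ∑ A ∈ V₂.powerset.filter (fun A => A.card = r), (-1 : ℝ) ^ r *
          ∑ i ∈ Finset.univ.filter (fun i => E i = A), α i := by
        rw [Finset.sum_filter]
        refine Finset.sum_congr rfl fun A hA => ?_
        by_cases hcard : A.card = r
        · rw [if_pos hcard, hcard]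
          congr 1
          refine Finset.sum_congr ?_ fun _ _ => rfl
          refine Finset.filter_congr fun i _ => ?_
          constructor
          · intro h
            exact (Finset.eq_of_subset_of_card_le h (by rw [hE i, hcard])).symm
          · intro h; rw [h]
        · rw [if_neg hcard]
          rcases lt_or_gt_of_ne hcard with hlt | hgt
          · rw [key (r - 1 - A.card) A (by omega)]; ring
          · have : Finset.univ.filter (fun i => A ⊆ E i) = ∅ := by
              refine Finset.filter_false_of_mem fun i _ hsub => ?_
              have := Finset.card_le_card hsub
              rw [hE i] at this; omega
            rw [this]; simp
    _ = (-1 : ℝ) ^ r * ∑ i ∈ Finset.univ.filter (fun i => E i ⊆ V₂), α i := by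
        rw [← Finset.mul_sum]
        congr 1
        rw [← Finset.sum_fiberwise_of_maps_to (g := E)
          (t := V₂.powerset.filter (fun A => A.card = r))
          (fun i hi => by
            simp only [Finset.mem_filter, Finset.mem_powerset]
            exact ⟨(Finset.mem_filter.mp hi).2, hE i⟩)]
        refine Finset.sum_congr rfl fun A hA => Finset.sum_congr ?_ fun _ _ => rfl
        have hAV : A ⊆ V₂ := Finset.mem_powerset.mp (Finset.mem_filter.mp hA).1
        rw [Finset.filter_filter]
        refine Finset.filter_congr fun i _ => ?_
        constructor
        · intro h; exact ⟨h ▸ hAV, h⟩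
        · exact And.right
end

section
/- Let r ≥ 1, let V be a finite set, and let E be a finite family of r-element subsets of V. For each e ∈ E let χ_e be the real vector indexed by the (r−1)-element subsets A of V with entry 1 if A ⊆ e and 0 otherwise. Suppose E' ⊆ E is such that for every e ∈ E the vector χ_e lies in the real linear span of {χ_{e'} : e' ∈ E'}. Then the hypergraph (V, E) admits a proper 2-coloring if and only if the hypergraph (V, E') admits a proper 2-coloring; in fact, every 2-coloring of V under which no hyperedge of E' is monochromatic also leaves no hyperedge of E monochromatic. -/
/-- The incidence vector of a hyperedge `e`, indexed by the `(r-1)`-element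
subsets `A` of the vertex set, with entry `1` if `A ⊆ e` and `0` otherwise. -/
noncomputable def edgeVector {V : Type} [DecidableEq V] (r : ℕ) (e : Finset V) :
    {A : Finset V // A.card = r - 1} → ℝ :=
  fun A => if (A : Finset V) ⊆ e then 1 else 0

/-- Weight used in the linear functional detecting monochromatic edges. -/
noncomputable def colorWeight (r : ℕ) : ℕ → ℝ :=
  fun a => (-1:ℝ)^a * a.factorial * (r-1-a).factorial

/-- The linear functional `x ↦ ∑_A w(A) x_A` where `w(A)` depends on the number
of vertices of `A` colored 0. -/
noncomputable def colorFun {V : Type} [Fintype V] [DecidableEq V] (r : ℕ) (c : V → Fin 2) :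
    ({A : Finset V // A.card = r - 1} → ℝ) →ₗ[ℝ] ℝ where
  toFun x := ∑ A : {A : Finset V // A.card = r - 1},
      colorWeight r (((A : Finset V).filter (fun v => c v = 0)).card) * x A
  map_add' x y := by simp [mul_add, Finset.sum_add_distrib]
  map_smul' t x := by
    simp only [Pi.smul_apply, smul_eq_mul, RingHom.id_apply, Finset.mul_sum]
    exact Finset.sum_congr rfl fun A _ => by ring

lemma colorFun_edgeVector {V : Type} [Fintype V] [DecidableEq V] (r : ℕ) (c : V → Fin 2)
    (s : Finset V) :
    colorFun r c (edgeVector r s) =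
      ∑ A ∈ s.powersetCard (r-1),
        colorWeight r ((A.filter (fun v => c v = 0)).card) := by
  show (∑ A : {A : Finset V // A.card = r - 1},
      colorWeight r (((A : Finset V).filter (fun v => c v = 0)).card)
        * (if (A : Finset V) ⊆ s then (1:ℝ) else 0)) = _
  rw [Finset.sum_congr rfl (fun A _ => by rw [mul_ite, mul_one, mul_zero]),
    ← Finset.sum_filter]
  refine Finset.sum_bij' (fun A _ => (A : Finset V))
    (fun A hA => ⟨A, (Finset.mem_powersetCard.mp hA).2⟩) ?_ ?_ ?_ ?_ ?_
  · intro A hA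
    simp only [Finset.mem_filter, Finset.mem_univ, true_and] at hA
    exact Finset.mem_powersetCard.mpr ⟨hA, A.2⟩
  · intro A hA
    simp [Finset.mem_powersetCard.mp hA |>.1]
  · intro A hA; rfl
  · intro A hA; rfl
  · intro A hA; rfl

lemma colorFun_mono {V : Type} [Fintype V] [DecidableEq V] (r : ℕ) (hr : 1 ≤ r)
    (c : V → Fin 2) (s : Finset V) (hs : s.card = r) (k : Fin 2)
    (hk : ∀ v ∈ s, c v = k) :
    colorFun r c (edgeVector r s) ≠ 0 := by
  rw [colorFun_edgeVector]
  have hchoose : r.choose (r-1) = r := by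
    have h1 : r - (r - 1) = 1 := by omega
    have := Nat.choose_symm (show r - 1 ≤ r by omega) (n := r)
    rw [h1] at this
    rw [← this, Nat.choose_one_right]
  have hcardP : (s.powersetCard (r-1)).card = r := by
    rw [Finset.card_powersetCard, hs, hchoose]
  have key : ∀ A ∈ s.powersetCard (r-1),
      colorWeight r ((A.filter (fun v => c v = 0)).card)
        = colorWeight r (if k = 0 then r - 1 else 0) := by
    intro A hA
    obtain ⟨hAs, hAc⟩ := Finset.mem_powersetCard.mp hA
    by_cases hk0 : k = 0
    · have : A.filter (fun v => c v = 0) = A :=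
        Finset.filter_true_of_mem (fun v hv => by rw [hk v (hAs hv), hk0])
      simp [hk0, this, hAc]
    · have : A.filter (fun v => c v = 0) = ∅ := by
        apply Finset.filter_false_of_mem
        intro v hv
        rw [hk v (hAs hv)]
        exact hk0
      simp [hk0, this]
  rw [Finset.sum_congr rfl key, Finset.sum_const, hcardP, nsmul_eq_mul]
  have hw : colorWeight r (if k = 0 then r - 1 else 0) ≠ 0 := by
    by_cases hk0 : k = 0 <;>
      simp [hk0, colorWeight, Nat.factorial_ne_zero, pow_ne_zero,
        Nat.cast_ne_zero, mul_ne_zero]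
  have hrR : (r:ℝ) ≠ 0 := by positivity
  exact mul_ne_zero hrR hw

lemma image_erase_eq_powersetCard {V : Type} [DecidableEq V] (r : ℕ)
    (s : Finset V) (hs : s.card = r) (hr : 1 ≤ r) :
    s.image (fun v => s.erase v) = s.powersetCard (r-1) := by
  ext A
  simp only [Finset.mem_image, Finset.mem_powersetCard]
  constructor
  · rintro ⟨v, hv, rfl⟩
    exact ⟨Finset.erase_subset _ _, by rw [Finset.card_erase_of_mem hv, hs]⟩
  · rintro ⟨hAs, hAc⟩
    have hne : (s \ A).Nonempty := by
      rw [← Finset.card_pos, Finset.card_sdiff_of_subset hAs, hs, hAc]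
      omega
    obtain ⟨v, hv⟩ := hne
    rw [Finset.mem_sdiff] at hv
    refine ⟨v, hv.1, ?_⟩
    refine (Finset.eq_of_subset_of_card_le (Finset.subset_erase.mpr ⟨hAs, hv.2⟩) ?_).symm
    rw [Finset.card_erase_of_mem hv.1, hs, hAc]

lemma colorFun_nonmono {V : Type} [Fintype V] [DecidableEq V] (r : ℕ) (hr : 1 ≤ r)
    (c : V → Fin 2) (s : Finset V) (hs : s.card = r)
    (hmono : ¬ ∃ k, ∀ v ∈ s, c v = k) :
    colorFun r c (edgeVector r s) = 0 := by
  rw [colorFun_edgeVector]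
  set a := (s.filter (fun v => c v = 0)).card with ha
  -- get both colors present
  have h0 : ∃ v ∈ s, c v = 0 := by
    by_contra h
    push_neg at h
    exact hmono ⟨1, fun v hv => by have := h v hv; omega⟩
  have h1 : ∃ v ∈ s, c v = 1 := by
    by_contra h
    push_neg at h
    exact hmono ⟨0, fun v hv => by have := h v hv; omega⟩
  obtain ⟨u, hu, hcu⟩ := h0
  obtain ⟨v, hv, hcv⟩ := h1
  have ha1 : 1 ≤ a := by
    rw [ha]
    refine Finset.card_pos.mpr ⟨u, Finset.mem_filter.mpr ⟨hu, hcu⟩⟩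
  have har : a < r := by
    rw [ha, ← hs]
    apply Finset.card_lt_card
    refine ⟨Finset.filter_subset _ _, fun hsub => ?_⟩
    have := Finset.mem_filter.mp (hsub hv)
    rw [hcv] at this
    exact absurd this.2 (by decide)
  -- rewrite the sum over powersetCard as a sum over vertices
  have himg := image_erase_eq_powersetCard r s hs hr
  have hinj : ∀ x ∈ s, ∀ y ∈ s, s.erase x = s.erase y → x = y := by
    intro x hx y hy hxy
    by_contra hne
    have : x ∈ s.erase y := Finset.mem_erase.mpr ⟨hne, hx⟩
    rw [← hxy] at this
    exact Finset.notMem_erase x s this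
  rw [← himg, Finset.sum_image hinj]
  have hcnt : ∀ v ∈ s, ((s.erase v).filter (fun w => c w = 0)).card
      = if c v = 0 then a - 1 else a := by
    intro v hvs
    rw [Finset.filter_erase]
    by_cases hcv0 : c v = 0
    · rw [if_pos hcv0, Finset.card_erase_of_mem (Finset.mem_filter.mpr ⟨hvs, hcv0⟩)]
    · rw [if_neg hcv0, Finset.erase_eq_of_notMem]
      intro hmem
      exact hcv0 (Finset.mem_filter.mp hmem).2
  rw [Finset.sum_congr rfl (fun v hv => by rw [hcnt v hv])]
  have : ∑ v ∈ s, colorWeight r (if c v = 0 then a - 1 else a)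
      = ∑ v ∈ s, (if c v = 0 then colorWeight r (a-1) else colorWeight r a) :=
    Finset.sum_congr rfl (fun v _ => by by_cases h : c v = 0 <;> simp [h])
  rw [this, Finset.sum_ite, Finset.sum_const, Finset.sum_const, ← ha]
  have hcard2 : (s.filter (fun v => ¬ c v = 0)).card = r - a := by
    have := Finset.card_filter_add_card_filter_not (s := s)
      (p := fun v => c v = 0)
    rw [← ha] at this
    omega
  rw [hcard2, nsmul_eq_mul, nsmul_eq_mul]
  clear_value a
  clear hcnt this hcard2 himg hinj hs hmono ha
  obtain ⟨a', b', rfl, hrr⟩ : ∃ a' b', a = a' + 1 ∧ r = a' + b' + 2 := by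
    exact ⟨a - 1, r - a - 1, by omega, by omega⟩
  subst hrr
  have e1 : a' + 1 - 1 = a' := by omega
  have e2 : a' + b' + 2 - (a' + 1) = b' + 1 := by omega
  have e3 : a' + b' + 2 - 1 - a' = b' + 1 := by omega
  have e4 : a' + b' + 2 - 1 - (a' + 1) = b' := by omega
  rw [e1, e2]
  simp only [colorWeight, e3, e4]
  push_cast [Nat.factorial_succ, pow_succ]
  ring

theorem representative_edges_preserve_two_colorability {V : Type} [Fintype V]
    [DecidableEq V] (r : ℕ) (hr : 1 ≤ r)
    (E : Finset (Finset V)) (hE : ∀ e ∈ E, e.card = r)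
    (E' : Finset (Finset V)) (hE' : E' ⊆ E)
    (hspan : ∀ e ∈ E,
      edgeVector r e ∈
        Submodule.span ℝ (edgeVector (V := V) r '' (E' : Set (Finset V)))) :
    (∀ c : V → Fin 2,
      (∀ e ∈ E', ¬ ∃ k, ∀ v ∈ e, c v = k) → (∀ e ∈ E, ¬ ∃ k, ∀ v ∈ e, c v = k)) ∧
    ((∃ c : V → Fin 2, ∀ e ∈ E, ¬ ∃ k, ∀ v ∈ e, c v = k) ↔
      (∃ c : V → Fin 2, ∀ e ∈ E', ¬ ∃ k, ∀ v ∈ e, c v = k)) := by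
  have main : ∀ c : V → Fin 2,
      (∀ e ∈ E', ¬ ∃ k, ∀ v ∈ e, c v = k) → (∀ e ∈ E, ¬ ∃ k, ∀ v ∈ e, c v = k) := by
    intro c hc e he hmono
    obtain ⟨k, hk⟩ := hmono
    have hker : Submodule.span ℝ (edgeVector (V := V) r '' (E' : Set (Finset V)))
        ≤ LinearMap.ker (colorFun r c) := by
      rw [Submodule.span_le]
      rintro _ ⟨e', he', rfl⟩
      rw [SetLike.mem_coe, LinearMap.mem_ker]
      exact colorFun_nonmono r hr c e' (hE e' (hE' he')) (hc e' he')
    have h0 : colorFun r c (edgeVector r e) = 0 :=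
      LinearMap.mem_ker.mp (hker (hspan e he))
    exact colorFun_mono r hr c e (hE e he) k hk h0
  refine ⟨main, ⟨fun ⟨c, hc⟩ => ⟨c, fun e he => hc e (hE' he)⟩,
    fun ⟨c, hc⟩ => ⟨c, main c hc⟩⟩⟩
end

section
/- Let r ≥ 1, let V be a finite set with |V| = n, and let E be a finite family of r-element subsets of V. Then there exists a subfamily E' ⊆ E with |E'| ≤ C(n, r−1) (the binomial coefficient n choose r−1) such that every 2-coloring of V under which no hyperedge of E' is monochromatic also leaves no hyperedge of E monochromatic; in particular, (V, E) is properly 2-colorable if and only if (V, E') is properly 2-colorable. -/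
/-!
Write `m e c ∈ 𝔽₂` for the parity of the number of colours in which `e` is monochromatic under `c`.
The colourings that are proper on `E'` are those killed by every `m e`, `e ∈ E'`, hence by their
span; so it suffices to pick `E' ⊆ E` with `m '' E'` a basis of `span (m '' E)`, and to show that
`m` spans at most `C(n, r - 1)` dimensions on the `r`-sets.

The only input for the latter is a cube relation: if `a` maps `f` injectively to a set disjoint
from `f`, the `2 ^ #f` sets obtained from `f` by moving some `t ⊆ f` along `a` have `m`-sum zero,
since the number of them that are monochromatic in colour `k` is
`∏ v ∈ f, (δₖ (c v) + δₖ (c (a v)))`, and both colours give the same parity. Any `g` on the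
`r`-subsets of an `n`-set satisfying these relations spans at most `C(n, r - 1)` dimensions: for a
vertex `w`, the `r`-sets avoiding `w` span at most `C(n - 1, r - 1)`, and modulo them
`e ↦ g (insert w e)` satisfies the cube relations on the `(r - 1)`-sets of the other vertices (send
`w` to a fresh vertex `u`: the faces through `u` avoid `w`), so it spans at most `C(n - 1, r - 2)`.
A fresh vertex exists once `n ≥ 2 r`; otherwise `C(n, r) ≤ C(n, r - 1)` and there is nothing to
prove.
-/

open Finset Module Submodule

section LinearAlgebra

variable {K U : Type*} [DivisionRing K] [AddCommGroup U] [Module K U]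

theorem Submodule.finrank_sup_le_finrank_add_finrank_map_mkQ (S T : Submodule K U)
    [FiniteDimensional K S] [FiniteDimensional K T] :
    finrank K ↥(S ⊔ T) ≤ finrank K S + finrank K ↥(T.map S.mkQ) := by
  have hsup := finrank_sup_add_finrank_inf_eq S T
  have hrank := LinearMap.finrank_range_add_finrank_ker (S.mkQ.domRestrict T)
  have hker : finrank K (S.mkQ.domRestrict T).ker = finrank K ↥(T ⊓ S) := by
    rw [LinearMap.ker_domRestrict, ker_mkQ, ← map_comap_subtype, finrank_map_subtype_eq]
  rw [LinearMap.range_domRestrict, hker, inf_comm] at hrank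
  omega

theorem finrank_span_image_union_le {ι κ : Type*} (s : Finset ι) (t : Finset κ) (g : ι → U)
    (h : κ → U) :
    finrank K (span K (g '' s ∪ h '' t)) ≤
      finrank K (span K (g '' s)) + finrank K (span K ((span K (g '' s)).mkQ ∘ h '' t)) := by
  have : FiniteDimensional K (span K (g '' s)) :=
    FiniteDimensional.span_of_finite K (s.finite_toSet.image g)
  have : FiniteDimensional K (span K (h '' t)) :=
    FiniteDimensional.span_of_finite K (t.finite_toSet.image h)
  rw [span_union, Set.image_comp, ← map_span]
  exact finrank_sup_le_finrank_add_finrank_map_mkQ _ _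

theorem finrank_span_image_finset_le_card {ι : Type*} (s : Finset ι) (g : ι → U) :
    finrank K (span K (g '' s)) ≤ #s := by
  classical
  rw [← coe_image]
  exact (finrank_span_finset_le_card _).trans card_image_le

theorem Finset.exists_subset_card_eq_finrank_span_image_eq {ι : Type*} (E : Finset ι)
    (g : ι → U) :
    ∃ E' ⊆ E, #E' = finrank K (span K (g '' E)) ∧ span K (g '' E') = span K (g '' E) := by
  classical
  have : FiniteDimensional K (span K (g '' E)) :=
    FiniteDimensional.span_of_finite K (E.finite_toSet.image g)
  obtain ⟨t, htE, htcard, htspan, -⟩ := exists_finset_span_eq_linearIndepOn K (g '' E)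
  obtain ⟨E', hE'E, hinj, himage⟩ :=
    exists_subset_injOn_image_eq_of_surjOn (E : Set ι) t fun _ hm ↦ htE hm
  refine ⟨E', mod_cast hE'E, by rw [← card_image_of_injOn hinj, himage, htcard], ?_⟩
  rw [← coe_image, himage, htspan]

end LinearAlgebra

theorem Nat.choose_succ_le_choose_of_le {n k : ℕ} (h : n ≤ 2 * k + 1) :
    n.choose (k + 1) ≤ n.choose k := by
  refine Nat.le_of_mul_le_mul_right ?_ k.succ_pos
  rw [choose_succ_right_eq]
  exact Nat.mul_le_mul_left _ (by omega)

section Cube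

variable {V : Type*} [DecidableEq V]

def cubeVertex (f : Finset V) (a : V → V) (t : Finset V) : Finset V := (f \ t) ∪ t.image a

section CubeVertex

variable {f t : Finset V} {a : V → V}

theorem disjoint_sdiff_image_of_mapsTo_compl (ht : t ⊆ f) (haf : ∀ v ∈ f, a v ∉ f) :
    Disjoint (f \ t) (t.image a) := by
  rw [disjoint_right]
  rintro _ hu hmem
  obtain ⟨v, hv, rfl⟩ := mem_image.mp hu
  exact haf v (ht hv) (mem_sdiff.mp hmem).1

theorem cubeVertex_mem_powersetCard {r : ℕ} {X : Finset V} (hf : f ∈ X.powersetCard r)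
    (ha : Set.InjOn a f) (haX : ∀ v ∈ f, a v ∈ X \ f) (ht : t ⊆ f) :
    cubeVertex f a t ∈ X.powersetCard r := by
  obtain ⟨hfX, rfl⟩ := mem_powersetCard.mp hf
  refine mem_powersetCard.mpr ⟨union_subset (sdiff_subset.trans hfX)
    (image_subset_iff.mpr fun v hv ↦ (mem_sdiff.mp (haX v (ht hv))).1), ?_⟩
  rw [cubeVertex, card_union_of_disjoint
      (disjoint_sdiff_image_of_mapsTo_compl ht fun v hv ↦ (mem_sdiff.mp (haX v hv)).2),
    card_sdiff_of_subset ht, card_image_of_injOn (ha.mono (coe_subset.mpr ht)),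
    Nat.sub_add_cancel (card_le_card ht)]

theorem notMem_cubeVertex {u : V} (huf : u ∉ f) (hua : u ∉ f.image a) (ht : t ⊆ f) :
    u ∉ cubeVertex f a t := by
  rw [cubeVertex, mem_union, not_or]
  exact ⟨fun h ↦ huf (mem_sdiff.mp h).1, fun h ↦ hua (image_subset_image ht h)⟩

theorem cubeVertex_congr {b : V → V} (ht : t ⊆ f) (hab : Set.EqOn a b f) :
    cubeVertex f a t = cubeVertex f b t := by
  rw [cubeVertex, cubeVertex, image_congr (hab.mono (coe_subset.mpr ht))]

theorem sum_powerset_prod_cubeVertex {R : Type*} [CommSemiring R] (ha : Set.InjOn a f)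
    (haf : ∀ v ∈ f, a v ∉ f) (Y : V → R) :
    ∑ t ∈ f.powerset, ∏ v ∈ cubeVertex f a t, Y v = ∏ v ∈ f, (Y (a v) + Y v) := by
  rw [prod_add]
  refine sum_congr rfl fun t ht ↦ ?_
  rw [mem_powerset] at ht
  rw [cubeVertex, prod_union (disjoint_sdiff_image_of_mapsTo_compl ht haf),
    prod_image fun x hx y hy ↦ ha (ht hx) (ht hy), mul_comm]

variable {w u : V}

theorem sum_powerset_insert_cubeVertex_update {M : Type*} [AddCommMonoid M] (hw : w ∉ f)
    (g : Finset V → M) :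
    ∑ t ∈ (insert w f).powerset, g (cubeVertex (insert w f) (Function.update a w u) t) =
      ∑ t ∈ f.powerset, g (insert w (cubeVertex f a t)) +
        ∑ t ∈ f.powerset, g (insert u (cubeVertex f a t)) := by
  have hupdate : Set.EqOn (Function.update a w u) a f := fun v hv ↦
    Function.update_of_ne (ne_of_mem_of_not_mem hv hw) ..
  rw [sum_powerset_insert hw]
  congr 1 <;> refine sum_congr rfl fun t ht ↦ ?_
  · rw [cubeVertex, insert_sdiff_of_notMem _ fun hwt ↦ hw (mem_powerset.mp ht hwt), insert_union,
      ← cubeVertex, cubeVertex_congr (mem_powerset.mp ht) hupdate]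
  · rw [cubeVertex, insert_sdiff_insert, sdiff_insert_of_notMem hw, image_insert,
      Function.update_self, union_insert, ← cubeVertex,
      cubeVertex_congr (mem_powerset.mp ht) hupdate]

theorem injOn_update_insert (ha : Set.InjOn a f) (hw : w ∉ f) (hu : u ∉ f.image a) :
    Set.InjOn (Function.update a w u) ↑(insert w f) := by
  have hupdate : ∀ v ∈ f, Function.update a w u v = a v := fun v hv ↦
    Function.update_of_ne (ne_of_mem_of_not_mem hv hw) ..
  rw [coe_insert, Set.injOn_insert (mod_cast hw)]
  refine ⟨ha.congr fun v hv ↦ (hupdate v hv).symm, ?_⟩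
  rintro ⟨v, hv, hav⟩
  rw [hupdate v hv, Function.update_self] at hav
  exact hu (mem_image.mpr ⟨v, hv, hav⟩)

theorem update_mem_insert_sdiff_insert {X : Finset V} (haX : ∀ v ∈ f, a v ∈ X \ f) (hw : w ∉ X)
    (hwf : w ∉ f) (huX : u ∈ X) (huf : u ∉ f) :
    ∀ v ∈ insert w f, Function.update a w u v ∈ insert w X \ insert w f := by
  have hmem : ∀ x ∈ X \ f, x ∈ insert w X \ insert w f := fun x hx ↦ by
    obtain ⟨hxX, hxf⟩ := mem_sdiff.mp hx
    simp only [mem_sdiff, mem_insert, not_or]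
    exact ⟨Or.inr hxX, fun h ↦ hw (h ▸ hxX), hxf⟩
  intro v hv
  rcases mem_insert.mp hv with rfl | hv
  · rw [Function.update_self]
    exact hmem u (mem_sdiff.mpr ⟨huX, huf⟩)
  · rw [Function.update_of_ne (ne_of_mem_of_not_mem hv hwf)]
    exact hmem _ (haX v hv)

end CubeVertex

def CubeSumsVanish {U : Type*} [AddCommMonoid U] (r : ℕ) (X : Finset V) (g : Finset V → U) :
    Prop :=
  ∀ f ∈ X.powersetCard r, ∀ a : V → V, Set.InjOn a f → (∀ v ∈ f, a v ∈ X \ f) →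
    ∑ t ∈ f.powerset, g (cubeVertex f a t) = 0

namespace CubeSumsVanish

variable {K U : Type*} [DivisionRing K] [AddCommGroup U] [Module K U]
  {r : ℕ} {X : Finset V} {g : Finset V → U}

theorem mono {Y : Finset V} (hg : CubeSumsVanish r X g) (hYX : Y ⊆ X) : CubeSumsVanish r Y g :=
  fun f hf a ha haY ↦ hg f (powersetCard_mono hYX hf) a ha fun v hv ↦
    mem_sdiff.mpr ⟨hYX (mem_sdiff.mp (haY v hv)).1, (mem_sdiff.mp (haY v hv)).2⟩

theorem apply_empty_eq_zero (hg : CubeSumsVanish 0 X g) : g ∅ = 0 := by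
  simpa [cubeVertex] using hg ∅ (by simp) id (by simp) (by simp)

variable (K) in
theorem link {w : V} (hw : w ∉ X) (hX : 2 * r < #X) (hg : CubeSumsVanish (r + 1) (insert w X) g) :
    CubeSumsVanish r X fun e ↦ (span K (g '' X.powersetCard (r + 1))).mkQ (g (insert w e)) := by
  intro f hf a ha haX
  obtain ⟨hfX, hfcard⟩ := mem_powersetCard.mp hf
  have hwf : w ∉ f := fun h ↦ hw (hfX h)
  obtain ⟨u, huX, hu⟩ : ∃ u ∈ X, u ∉ f ∪ f.image a :=
    exists_mem_notMem_of_card_lt_card <| (card_union_le _ _).trans_lt <| by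
      have := card_image_le (s := f) (f := a); omega
  rw [mem_union, not_or] at hu
  have hsum := hg (insert w f)
    (mem_powersetCard.mpr ⟨insert_subset_insert w hfX, by rw [card_insert_of_notMem hwf, hfcard]⟩)
    (Function.update a w u) (injOn_update_insert ha hwf hu.2)
    (update_mem_insert_sdiff_insert haX hw hwf huX hu.1)
  rw [sum_powerset_insert_cubeVertex_update hwf] at hsum
  have hfar : ∀ t ∈ f.powerset,
      (span K (g '' X.powersetCard (r + 1))).mkQ (g (insert u (cubeVertex f a t))) = 0 := by
    intro t ht
    refine (Quotient.mk_eq_zero _).mpr (subset_span ⟨_, ?_, rfl⟩)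
    have hcube := cubeVertex_mem_powersetCard hf ha haX (mem_powerset.mp ht)
    rw [mem_powersetCard] at hcube
    rw [mem_coe, mem_powersetCard]
    exact ⟨insert_subset huX hcube.1, by
      rw [card_insert_of_notMem (notMem_cubeVertex hu.1 hu.2 (mem_powerset.mp ht)), hcube.2]⟩
  have hquot := congrArg (span K (g '' X.powersetCard (r + 1))).mkQ hsum
  rwa [map_add, map_sum, map_sum, sum_eq_zero hfar, add_zero, map_zero] at hquot

theorem finrank_span_le {k : ℕ} (hg : CubeSumsVanish (k + 1) X g) :
    finrank K (span K (g '' X.powersetCard (k + 1))) ≤ (#X).choose k := by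
  induction X using Finset.induction_on generalizing k U with
  | empty =>
    rw [powersetCard_eq_empty.mpr (by simp), coe_empty, Set.image_empty, span_empty, finrank_bot]
    exact Nat.zero_le _
  | insert w X hw ih =>
    rw [card_insert_of_notMem hw]
    by_cases hsmall : #X + 1 ≤ 2 * k + 1
    · refine (finrank_span_image_finset_le_card _ g).trans ?_
      rw [card_powersetCard, card_insert_of_notMem hw]
      exact Nat.choose_succ_le_choose_of_le hsmall
    have hlink := hg.link K hw (by omega)
    rw [powersetCard_succ_insert hw, coe_union, coe_image, Set.image_union, ← Set.image_comp]
    refine (finrank_span_image_union_le _ _ g (g ∘ insert w)).trans ?_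
    have hS : finrank K (span K (g '' X.powersetCard (k + 1))) ≤ (#X).choose k :=
      ih (hg.mono (subset_insert w X))
    cases k with
    | zero =>
      have hlink_zero : (span K (g '' X.powersetCard 1)).mkQ ∘ g ∘ insert w ''
          (X.powersetCard 0 : Set (Finset V)) = {0} := by
        rw [powersetCard_zero, coe_singleton, Set.image_singleton]
        exact congrArg _ hlink.apply_empty_eq_zero
      rw [hlink_zero, span_zero_singleton, finrank_bot]
      simpa using hS
    | succ j =>
      exact (Nat.add_le_add hS (ih hlink)).trans_eq (by rw [add_comm, Nat.choose_succ_succ'])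

end CubeSumsVanish

end Cube

section Monochromatic

variable {V : Type*}

-- Both colours count for `e = ∅`, so `monoParity ∅ = 0`, as the cube relation at `f = ∅` demands.
def monoParity (e : Finset V) (c : V → Fin 2) : ZMod 2 :=
  ∑ k : Fin 2, ∏ v ∈ e, if c v = k then 1 else 0

theorem monoParity_eq_zero_iff {e : Finset V} (he : e.Nonempty) (c : V → Fin 2) :
    monoParity e c = 0 ↔ ¬∃ k, ∀ v ∈ e, c v = k := by
  obtain ⟨v₀, hv₀⟩ := he
  simp only [monoParity, prod_boole, Fin.sum_univ_two, Fin.exists_fin_two, not_or]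
  have hexcl : (∀ v ∈ e, c v = 0) → ¬∀ v ∈ e, c v = 1 := fun h0 h1 ↦
    absurd ((h0 v₀ hv₀).symm.trans (h1 v₀ hv₀)) (by decide)
  by_cases h0 : ∀ v ∈ e, c v = 0
  · simp [hexcl h0]
  · by_cases h1 : ∀ v ∈ e, c v = 1 <;> simp [h0, h1]

variable [DecidableEq V]

theorem cubeSumsVanish_monoParity (r : ℕ) (X : Finset V) : CubeSumsVanish r X monoParity := by
  intro f _ a ha haX
  have haf : ∀ v ∈ f, a v ∉ f := fun v hv ↦ (mem_sdiff.mp (haX v hv)).2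
  funext c
  simp only [Finset.sum_apply, monoParity, Pi.zero_apply]
  rw [sum_comm]
  simp only [sum_powerset_prod_cubeVertex ha haf, Fin.sum_univ_two]
  have hflip : ∀ x y : Fin 2, ((if x = 0 then 1 else 0) + (if y = 0 then 1 else 0) : ZMod 2) =
      (if x = 1 then 1 else 0) + (if y = 1 then 1 else 0) := by decide
  simp only [hflip, CharTwo.add_self_eq_zero]

end Monochromatic

theorem uniform_hypergraph_sparsification {V : Type} [Fintype V]
    [DecidableEq V] (r n : ℕ) (hr : 1 ≤ r) (hn : Fintype.card V = n)
    (E : Finset (Finset V)) (hE : ∀ e ∈ E, e.card = r) :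
    ∃ E' ⊆ E, E'.card ≤ n.choose (r - 1) ∧
      (∀ c : V → Fin 2,
        (∀ e ∈ E', ¬ ∃ k, ∀ v ∈ e, c v = k) → (∀ e ∈ E, ¬ ∃ k, ∀ v ∈ e, c v = k)) ∧
      ((∃ c : V → Fin 2, ∀ e ∈ E, ¬ ∃ k, ∀ v ∈ e, c v = k) ↔
        (∃ c : V → Fin 2, ∀ e ∈ E', ¬ ∃ k, ∀ v ∈ e, c v = k)) := by
  obtain ⟨k, rfl⟩ : ∃ k, r = k + 1 := ⟨r - 1, by omega⟩
  have hne : ∀ e ∈ E, e.Nonempty := fun e he ↦ card_pos.mp (by rw [hE e he]; omega)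
  obtain ⟨E', hE'E, hE'card, hspan⟩ :=
    E.exists_subset_card_eq_finrank_span_image_eq (K := ZMod 2) monoParity
  have hdim : finrank (ZMod 2) (span (ZMod 2) (monoParity '' (E : Set (Finset V)))) ≤
      n.choose k := by
    have hbound := (cubeSumsVanish_monoParity (k + 1) (univ : Finset V)).finrank_span_le
      (K := ZMod 2)
    rw [card_univ, hn] at hbound
    refine le_trans (finrank_mono (span_mono (Set.image_mono fun e he ↦ ?_))) hbound
    exact mem_powersetCard.mpr ⟨subset_univ e, hE e he⟩
  have hproper : ∀ c : V → Fin 2,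
      (∀ e ∈ E', ¬∃ k, ∀ v ∈ e, c v = k) → ∀ e ∈ E, ¬∃ k, ∀ v ∈ e, c v = k := by
    intro c hc e he
    have hker : span (ZMod 2) (monoParity '' E') ≤ LinearMap.ker (LinearMap.proj c) :=
      span_le.mpr <| Set.image_subset_iff.mpr fun e' he' ↦
        (monoParity_eq_zero_iff (hne e' (hE'E he')) c).mpr (hc e' he')
    rw [← monoParity_eq_zero_iff (hne e he)]
    exact hker (hspan ▸ subset_span (Set.mem_image_of_mem monoParity (mem_coe.mpr he)))
  exact ⟨E', hE'E, hE'card.trans_le hdim, hproper, fun ⟨c, hc⟩ ↦ ⟨c, fun e he ↦ hc e (hE'E he)⟩,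
    fun ⟨c, hc⟩ ↦ ⟨c, hproper c hc⟩⟩
end

section
/- Let d ≥ 1, let V be a finite set with |V| = n and d ≤ n, and let E be a finite family of nonempty subsets of V, each of size at most d. Then there exists a subfamily E' ⊆ E with |E'| ≤ 2·n^{d−1} such that the hypergraph (V, E) is properly 2-colorable if and only if the hypergraph (V, E') is properly 2-colorable. -/
/-!
Each hyperedge `e` gives a function `edgePoly e` on the cube `{0,1}^V`, a product of `#e - 1`
affine forms, that vanishes at a coloring exactly when `e` is not monochromatic. These functions
lie in the span of the multilinear monomials of degree `< d`, whose dimension is at most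
`∑_{j<d} C(n,j) ≤ 2 n^(d-1)`. Let `E'` index a basis of their span: a coloring at which the
`edgePoly` of `E'` vanish kills every linear combination of them, hence every `edgePoly e`.
-/

open Finset Module Submodule

theorem exists_subset_card_le_finrank_forall_mem_span {K M ι : Type*} [DivisionRing K]
    [AddCommGroup M] [Module K M] {W : Submodule K M} [FiniteDimensional K W]
    (f : ι → M) (s : Finset ι) (hs : ∀ i ∈ s, f i ∈ W) :
    ∃ t ⊆ s, #t ≤ finrank K W ∧ ∀ i ∈ s, f i ∈ span K (f '' t) := by
  classical
  obtain ⟨κ, a, ha, hspan, hli⟩ := exists_linearIndependent' K fun i : s => f i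
  have : Fintype κ := Fintype.ofInjective a ha
  refine ⟨univ.image fun k => (a k : ι), fun i hi => ?_, ?_, fun i hi => ?_⟩
  · obtain ⟨k, -, rfl⟩ := mem_image.1 hi
    exact (a k).2
  · calc #(univ.image fun k => (a k : ι)) ≤ Fintype.card κ := card_image_le
      _ = finrank K (span K (Set.range ((fun i : s => f i) ∘ a))) :=
        (finrank_span_eq_card hli).symm
      _ ≤ finrank K W :=
        Submodule.finrank_mono (span_le.2 (Set.range_subset_iff.2 fun k => hs _ (a k).2))
  · have hi : f i ∈ span K (Set.range fun i : s => f i) := subset_span ⟨⟨i, hi⟩, rfl⟩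
    rw [← hspan] at hi
    refine span_mono ?_ hi
    rintro _ ⟨k, rfl⟩
    exact ⟨a k, by simp, rfl⟩

theorem apply_eq_zero_of_mem_span {X K : Type*} [Semiring K] {s : Set (X → K)} {x : X}
    (h : ∀ g ∈ s, g x = 0) {g : X → K} (hg : g ∈ span K s) : g x = 0 :=
  span_le (p := LinearMap.ker (LinearMap.proj x)).2 h hg

theorem card_filter_card_le_le {V : Type*} [Fintype V] {t : ℕ} (ht : t ≤ Fintype.card V) :
    #{S : Finset V | #S ≤ t} ≤ 2 * Fintype.card V ^ t := by
  classical
  set n := Fintype.card V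
  rcases le_or_gt n 1 with hn | hn
  · calc #{S : Finset V | #S ≤ t} ≤ #(univ : Finset (Finset V)) := card_filter_le _ _
      _ = 2 ^ n := by simp [n]
      _ ≤ 2 * n ^ t := by interval_cases n <;> interval_cases t <;> simp
  · calc #{S : Finset V | #S ≤ t}
        = ∑ j ∈ range (t + 1), #{S : Finset V | #S ≤ t ∧ #S = j} := by
          rw [card_eq_sum_card_fiberwise (f := card) (t := range (t + 1))]
          · simp only [filter_filter]
          · intro S hS
            simpa [Nat.lt_succ_iff] using hS
      _ ≤ ∑ j ∈ range (t + 1), n ^ j := by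
          refine sum_le_sum fun j _ => ?_
          calc #{S : Finset V | #S ≤ t ∧ #S = j} ≤ #{S : Finset V | #S = j} :=
                card_le_card fun S hS => by simp_all
            _ = n.choose j := by rw [← Fintype.card_subtype, Fintype.card_finset_len]
            _ ≤ n ^ j := Nat.choose_le_pow n j
      _ = ∑ j ∈ range t, n ^ j + n ^ t := sum_range_succ _ _
      _ ≤ 2 * n ^ t := by
          have := Nat.geomSum_lt hn (s := range t) (n := t) fun k hk => mem_range.1 hk
          omega

theorem prod_range_sub_ne_zero_iff {K : Type*} [Field K] [CharZero K] {t m : ℕ} (ht : t ≤ m) :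
    ∏ j ∈ range (m - 1), ((t : K) - (j + 1)) ≠ 0 ↔ t = 0 ∨ t = m := by
  simp only [prod_ne_zero_iff, mem_range, sub_ne_zero]
  norm_cast
  constructor
  · intro h
    by_contra! h'
    exact h (t - 1) (by omega) (by omega)
  · omega

namespace BooleanCube

variable {V : Type*}

/-- The multilinear monomial `∏ v ∈ S, x v` on the cube, where `x v c = 1` iff `c v = 1`. -/
def monomial (S : Finset V) : (V → Fin 2) → ℚ :=
  fun c => if ∀ v ∈ S, c v = 1 then 1 else 0

theorem monomial_empty : monomial (∅ : Finset V) = 1 := by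
  funext c
  simp [monomial]

theorem monomial_mul_monomial [DecidableEq V] (S T : Finset V) :
    monomial S * monomial T = monomial (S ∪ T) := by
  funext c
  simp only [Pi.mul_apply, monomial, ite_zero_mul_ite_zero, mul_one, forall_mem_union]

def degreeLE (t : ℕ) : Submodule ℚ ((V → Fin 2) → ℚ) :=
  span ℚ (monomial '' {S | #S ≤ t})

theorem monomial_mem_degreeLE {S : Finset V} {t : ℕ} (hS : #S ≤ t) :
    monomial S ∈ degreeLE t :=
  subset_span ⟨S, hS, rfl⟩

theorem degreeLE_mono {s t : ℕ} (h : s ≤ t) : degreeLE (V := V) s ≤ degreeLE t :=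
  span_mono (Set.image_mono fun _ hS => le_trans hS h)

theorem degreeLE_mul_le (s t : ℕ) : degreeLE (V := V) s * degreeLE t ≤ degreeLE (s + t) := by
  classical
  rw [degreeLE, degreeLE, span_mul_span]
  refine span_mono ?_
  rintro _ ⟨_, ⟨S, hS, rfl⟩, _, ⟨T, hT, rfl⟩, rfl⟩
  exact ⟨S ∪ T, (card_union_le S T).trans (add_le_add hS hT),
    (monomial_mul_monomial S T).symm⟩

instance : SetLike.GradedMonoid (degreeLE (V := V)) where
  one_mem := monomial_empty (V := V) ▸ monomial_mem_degreeLE card_empty.le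
  mul_mem _ _ _ _ ha hb := degreeLE_mul_le _ _ (mul_mem_mul ha hb)

theorem finrank_degreeLE_le [Fintype V] (t : ℕ) :
    finrank ℚ (degreeLE (V := V) t) ≤ #{S : Finset V | #S ≤ t} := by
  classical
  rw [degreeLE, Set.image_eq_range]
  refine (finrank_range_le_card _).trans_eq ?_
  simp [Fintype.card_subtype]

/-- `∑ v ∈ e, monomial {v}` counts the vertices of `e` of color `1`; the factors kill the counts
strictly between `0` and `#e`. -/
def edgePoly (e : Finset V) : (V → Fin 2) → ℚ :=
  ∏ j ∈ range (#e - 1), (∑ v ∈ e, monomial {v} - (j + 1 : ℕ))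

theorem edgePoly_mem_degreeLE (e : Finset V) : edgePoly e ∈ degreeLE (#e - 1) := by
  have hone : (1 : (V → Fin 2) → ℚ) ∈ degreeLE 1 :=
    monomial_empty (V := V) ▸ monomial_mem_degreeLE (by simp)
  have := SetLike.prod_mem_graded degreeLE (fun _ => 1)
    (fun j : ℕ => ∑ v ∈ e, monomial {v} - (j + 1 : ℕ)) (F := range (#e - 1)) fun j _ =>
      sub_mem (sum_mem fun v _ => monomial_mem_degreeLE (card_singleton v).le)
        (by simpa using nsmul_mem hone (j + 1))
  simpa [edgePoly] using this

theorem edgePoly_apply (e : Finset V) (c : V → Fin 2) :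
    edgePoly e c = ∏ j ∈ range (#e - 1), ((#{v ∈ e | c v = 1} : ℚ) - (j + 1)) := by
  simp [edgePoly, monomial]

theorem exists_forall_mem_eq_iff_card_filter (e : Finset V) (c : V → Fin 2) :
    (∃ k, ∀ v ∈ e, c v = k) ↔ #{v ∈ e | c v = 1} = 0 ∨ #{v ∈ e | c v = 1} = #e := by
  rw [card_eq_zero, filter_eq_empty_iff, card_filter_eq_iff]
  constructor
  · rintro ⟨k, hk⟩
    fin_cases k
    · exact Or.inl fun v hv => by simp [hk v hv]
    · exact Or.inr hk
  · rintro (h | h)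
    · exact ⟨0, fun v hv => by have := h hv; omega⟩
    · exact ⟨1, h⟩

theorem edgePoly_apply_ne_zero_iff (e : Finset V) (c : V → Fin 2) :
    edgePoly e c ≠ 0 ↔ ∃ k, ∀ v ∈ e, c v = k := by
  rw [edgePoly_apply, prod_range_sub_ne_zero_iff (card_filter_le _ _),
    exists_forall_mem_eq_iff_card_filter]

end BooleanCube

open BooleanCube in
theorem hypergraph_two_colorability_kernel_general {V : Type} [Fintype V]
    (d n : ℕ) (hn : Fintype.card V = n)
    (hdn : d ≤ n)
    (E : Finset (Finset V)) (hE : ∀ e ∈ E, e.Nonempty ∧ e.card ≤ d) :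
    ∃ E' ⊆ E, E'.card ≤ 2 * n ^ (d - 1) ∧
      ((∃ c : V → Fin 2, ∀ e ∈ E, ¬ ∃ k, ∀ v ∈ e, c v = k) ↔
        (∃ c : V → Fin 2, ∀ e ∈ E', ¬ ∃ k, ∀ v ∈ e, c v = k)) := by
  obtain ⟨E', hE'E, hE'card, hspan⟩ :=
    exists_subset_card_le_finrank_forall_mem_span (W := degreeLE (d - 1)) edgePoly E
      fun e he => degreeLE_mono (Nat.sub_le_sub_right (hE e he).2 1) (edgePoly_mem_degreeLE e)
  refine ⟨E', hE'E, ?_, fun ⟨c, hc⟩ => ⟨c, fun e he => hc e (hE'E he)⟩,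
    fun ⟨c, hc⟩ => ⟨c, ?_⟩⟩
  · calc #E' ≤ finrank ℚ (degreeLE (V := V) (d - 1)) := hE'card
      _ ≤ #{S : Finset V | #S ≤ d - 1} := finrank_degreeLE_le _
      _ ≤ 2 * n ^ (d - 1) := hn ▸ card_filter_card_le_le (by omega)
  · have hvanish : ∀ g ∈ edgePoly '' E', g c = 0 := by
      rintro _ ⟨e, he, rfl⟩
      exact not_ne_iff.1 (mt (edgePoly_apply_ne_zero_iff e c).1 (hc e he))
    exact fun e he hmono => (edgePoly_apply_ne_zero_iff e c).2 hmono
      (apply_eq_zero_of_mem_span hvanish (hspan e he))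

theorem hypergraph_two_colorability_kernel {V : Type} [Fintype V]
    [DecidableEq V] (d n : ℕ) (hd : 1 ≤ d) (hn : Fintype.card V = n)
    (hdn : d ≤ n)
    (E : Finset (Finset V)) (hE : ∀ e ∈ E, e.Nonempty ∧ e.card ≤ d) :
    ∃ E' ⊆ E, E'.card ≤ 2 * n ^ (d - 1) ∧
      ((∃ c : V → Fin 2, ∀ e ∈ E, ¬ ∃ k, ∀ v ∈ e, c v = k) ↔
        (∃ c : V → Fin 2, ∀ e ∈ E', ¬ ∃ k, ∀ v ∈ e, c v = k)) :=
  hypergraph_two_colorability_kernel_general d n hn hdn E hE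
end

section
/- Let d ≥ 1 and let H = (V, E) be a d-uniform hypergraph on n vertices that is not properly 2-colorable, but such that for every hyperedge e ∈ E the hypergraph (V, E ∖ {e}) is properly 2-colorable. Then the number of hyperedges satisfies |E| ≤ C(n, d−1) (the binomial coefficient n choose d−1). -/
/-!
Lovász's linear-algebra argument. By criticality, for each edge `e` there is a 2-coloring in
which `e` is the only monochromatic edge; its colour class `S` contains `e` and splits every
other edge. In `ℝ^E`, the vectors `e' ↦ [f ⊆ e']` for the `(d-1)`-sets `f` then span every unit
vector `δ_e`: with `a m = (-1)^m / (d * C(d-1, m))`, the value of `∑_f a #(f \ S) [f ⊆ e']` is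
`(d - m) a m + m a (m - 1)` for `m = #(e' \ S)`, which is `1` for `e' = e` (`m = 0`) and `0` for
the split edges (`0 < m < d`). Hence `|E| = dim ℝ^E ≤ C(n, d-1)`.
-/

open Finset Submodule

section Coloring

variable {V : Type*}

def IsMonochromatic (c : V → Fin 2) (e : Finset V) : Prop := ∃ k, ∀ v ∈ e, c v = k

lemma exists_mem_eq_of_not_isMonochromatic {c : V → Fin 2} {e : Finset V}
    (h : ¬IsMonochromatic c e) (k : Fin 2) : ∃ v ∈ e, c v = k := by
  by_contra! hk
  exact h ⟨k + 1, fun v hv => by have := hk v hv; omega⟩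

variable [Fintype V] [DecidableEq V]

lemma exists_splitting_set_of_critical {E : Finset (Finset V)}
    (hnc : ¬∃ c : V → Fin 2, ∀ e ∈ E, ¬IsMonochromatic c e)
    (hcrit : ∀ e ∈ E, ∃ c : V → Fin 2, ∀ e' ∈ E.erase e, ¬IsMonochromatic c e')
    {e : Finset V} (he : e ∈ E) :
    ∃ S : Finset V, e ⊆ S ∧ ∀ e' ∈ E, e' ≠ e → (e' ∩ S).Nonempty ∧ (e' \ S).Nonempty := by
  obtain ⟨c, hc⟩ := hcrit e he
  push Not at hnc
  obtain ⟨e₀, he₀, hmono⟩ := hnc c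
  obtain rfl : e₀ = e := by
    by_contra hne
    exact hc e₀ (mem_erase.2 ⟨hne, he₀⟩) hmono
  obtain ⟨k, hk⟩ := hmono
  refine ⟨univ.filter (c · = k), fun v hv => by simpa using hk v hv, fun e' he' hne => ?_⟩
  have hsplit := hc e' (mem_erase.2 ⟨hne, he'⟩)
  obtain ⟨u, hu, hcu⟩ := exists_mem_eq_of_not_isMonochromatic hsplit k
  obtain ⟨w, hw, hcw⟩ := exists_mem_eq_of_not_isMonochromatic hsplit (k + 1)
  have hwk : c w ≠ k := by omega
  exact ⟨⟨u, by simp [hu, hcu]⟩, ⟨w, by simp [hw, hwk]⟩⟩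

end Coloring

lemma powersetCard_eq_image_erase {α : Type*} [DecidableEq α] {x : Finset α} {k : ℕ}
    (hx : #x = k + 1) : x.powersetCard k = x.image x.erase := by
  ext f
  rw [mem_powersetCard, mem_image, ← covBy_iff_exists_erase, covBy_iff_card_sdiff_eq_one]
  refine and_congr_right fun hfx => ?_
  have := card_le_card hfx
  rw [card_sdiff_of_subset hfx]
  omega

lemma sum_card_erase_sdiff {α M : Type*} [DecidableEq α] [AddCommMonoid M]
    (g : ℕ → M) (x A : Finset α) :
    ∑ v ∈ x, g #(x.erase v \ A) = #(x ∩ A) • g #(x \ A) + #(x \ A) • g (#(x \ A) - 1) := by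
  rw [← sum_inter_add_sum_sdiff x A, ← sum_const, ← sum_const]
  congr 1 <;> refine sum_congr rfl fun v hv => ?_ <;> rw [erase_sdiff_comm]
  · rw [erase_eq_of_notMem fun h => (mem_sdiff.1 h).2 (mem_inter.1 hv).2]
  · rw [card_erase_of_mem hv]

lemma card_le_card_of_single_mem_span {K ι η : Type*} [Field K] [Fintype η] [DecidableEq η]
    (s : Finset ι) (v : ι → η → K) (h : ∀ i, Pi.single i 1 ∈ span K (v '' s)) :
    Fintype.card η ≤ #s := by
  have hspan : span K (v '' s) = ⊤ := by
    rw [eq_top_iff, ← (Pi.basisFun K η).span_eq, span_le]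
    rintro _ ⟨i, rfl⟩
    simpa using h i
  calc Fintype.card η = Module.finrank K (span K (v '' s)) := by
        rw [hspan, finrank_top, Module.finrank_fintype_fun_eq_card]
    _ ≤ Fintype.card s := by rw [Set.image_eq_range]; exact finrank_range_le_card _
    _ = #s := Fintype.card_coe s

noncomputable def splitCoeff (d m : ℕ) : ℝ := (-1) ^ m / (d * (d - 1).choose m)

lemma natCast_mul_splitCoeff_zero {d : ℕ} (hd : 1 ≤ d) : (d : ℝ) * splitCoeff d 0 = 1 := by
  have : (d : ℝ) ≠ 0 := by exact_mod_cast (by omega : d ≠ 0)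
  simp [splitCoeff, this]

lemma splitCoeff_recurrence {d m : ℕ} (hm : 0 < m) (hmd : m < d) :
    ((d - m : ℕ) : ℝ) * splitCoeff d m + m * splitCoeff d (m - 1) = 0 := by
  obtain ⟨k, rfl⟩ : ∃ k, m = k + 1 := ⟨m - 1, by omega⟩
  have hchoose : ((d - 1).choose (k + 1) : ℝ) * (k + 1) =
      (d - 1).choose k * ((d - (k + 1) : ℕ) : ℝ) := by
    rw [show d - (k + 1) = d - 1 - k by omega]
    exact_mod_cast Nat.choose_succ_right_eq (d - 1) k
  have h1 : ((d - 1).choose (k + 1) : ℝ) ≠ 0 := by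
    exact_mod_cast (Nat.choose_pos (by omega)).ne'
  have h0 : ((d - 1).choose k : ℝ) ≠ 0 := by
    exact_mod_cast (Nat.choose_pos (by omega)).ne'
  have hd : (d : ℝ) ≠ 0 := by exact_mod_cast (by omega : d ≠ 0)
  simp only [splitCoeff, Nat.add_sub_cancel, mul_div_assoc']
  rw [div_add_div _ _ (by positivity) (by positivity), div_eq_zero_iff]
  left
  push_cast
  linear_combination (-1) ^ k * d * hchoose

section InclusionVector

variable {V : Type*} [Fintype V] [DecidableEq V] (E : Finset (Finset V))

def inclusionVector (f : Finset V) : E → ℝ := fun e => if f ⊆ e.1 then 1 else 0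

lemma sum_powersetCard_smul_inclusionVector_apply (g : Finset V → ℝ) {k : ℕ} (e : E)
    (he : #e.1 = k + 1) :
    (∑ f ∈ univ.powersetCard k, g f • inclusionVector E f) e = ∑ v ∈ e.1, g (e.1.erase v) := by
  simp only [Finset.sum_apply, Pi.smul_apply, inclusionVector, smul_eq_mul, mul_ite, mul_one, mul_zero]
  rw [← sum_filter, ← sum_image (erase_injOn _), ← powersetCard_eq_image_erase he]
  congr 1
  ext f
  simp [mem_powersetCard, and_comm]

variable {E}

lemma single_eq_sum_splitCoeff_smul_inclusionVector {d : ℕ} (hd : 1 ≤ d)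
    (hE : ∀ e ∈ E, #e = d) {S : Finset V} (e : E) (heS : e.1 ⊆ S)
    (hsplit : ∀ e' ∈ E, e' ≠ e.1 → (e' ∩ S).Nonempty ∧ (e' \ S).Nonempty) :
    Pi.single e 1 = ∑ f ∈ univ.powersetCard (d - 1), splitCoeff d #(f \ S) • inclusionVector E f := by
  ext e'
  have hcard := hE e' e'.2
  rw [sum_powersetCard_smul_inclusionVector_apply E _ e' (by omega),
    sum_card_erase_sdiff (splitCoeff d) e'.1 S, Pi.single_apply]
  have hinter : #(e'.1 ∩ S) = d - #(e'.1 \ S) := by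
    have := card_sdiff_add_card_inter e'.1 S
    omega
  split_ifs with h
  · subst h
    simp [sdiff_eq_empty_iff_subset.2 heS, inter_eq_left.2 heS, hcard, natCast_mul_splitCoeff_zero hd]
  · obtain ⟨hin, hout⟩ := hsplit e' e'.2 (Subtype.coe_injective.ne h)
    have := card_pos.2 hin
    rw [nsmul_eq_mul, nsmul_eq_mul, hinter]
    exact (splitCoeff_recurrence (card_pos.2 hout) (by omega)).symm

theorem card_le_choose_of_forall_exists_splitting_set {d : ℕ} (hd : 1 ≤ d)
    (hE : ∀ e ∈ E, #e = d)
    (hS : ∀ e ∈ E, ∃ S, e ⊆ S ∧ ∀ e' ∈ E, e' ≠ e → (e' ∩ S).Nonempty ∧ (e' \ S).Nonempty) :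
    #E ≤ (Fintype.card V).choose (d - 1) := by
  calc #E = Fintype.card E := (Fintype.card_coe E).symm
    _ ≤ #(univ.powersetCard (d - 1)) := card_le_card_of_single_mem_span _ (inclusionVector E) ?_
    _ = (Fintype.card V).choose (d - 1) := by rw [card_powersetCard, card_univ]
  intro e
  obtain ⟨S, heS, hsplit⟩ := hS e e.2
  rw [single_eq_sum_splitCoeff_smul_inclusionVector hd hE e heS hsplit]
  exact sum_mem fun f hf => smul_mem _ _ (subset_span (Set.mem_image_of_mem _ hf))

end InclusionVector

theorem critically_non_two_colorable_hypergraph_edge_bound {V : Type}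
    [Fintype V] [DecidableEq V] (d n : ℕ) (hd : 1 ≤ d)
    (hn : Fintype.card V = n)
    (E : Finset (Finset V)) (hE : ∀ e ∈ E, e.card = d)
    (hnc : ¬ ∃ c : V → Fin 2, ∀ e ∈ E, ¬ ∃ k, ∀ v ∈ e, c v = k)
    (hcrit : ∀ e ∈ E, ∃ c : V → Fin 2, ∀ e' ∈ E.erase e, ¬ ∃ k, ∀ v ∈ e', c v = k) :
    E.card ≤ n.choose (d - 1) :=
  hn ▸ card_le_choose_of_forall_exists_splitting_set hd hE
    fun _ he => exists_splitting_set_of_critical hnc hcrit he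
end

section
/- Let d ≥ 1, let ι be a finite set of n variables with d ≤ 2n, and let F be a finite set of clauses over ι, where each clause is a nonempty finite set of at most d literals and a literal is a pair (i, b) with i ∈ ι and b a Boolean. Then there exists a subset F' ⊆ F with |F'| ≤ 2·(2n)^{d−1} such that F' is NAE-satisfiable if and only if F is NAE-satisfiable. -/
/-!
Pass to a minimal non-NAE-satisfiable subfamily `G ⊆ F`: for each clause `C ∈ G` there is an
assignment `a_C` violating `C` but NAE-satisfying every other clause of `G`. If `s_C(a)` counts
the literals of `C` true under `a`, then `p_C = ∏_{k=1}^{|C|-1} (s_C - k)` vanishes at `a` exactly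
when `a` NAE-satisfies `C`, so `p_C(a_D) ≠ 0 ↔ C = D` and the `p_C` are linearly independent.
Each `p_C` is a polynomial of degree at most `d - 1` in the `2n` literal indicators, and
indicators being idempotent, such polynomials span a space of dimension at most
`∑_{k<d} (2n)^k ≤ 2 (2n)^(d-1)`.
-/

open Finset

theorem linearIndependent_of_diagonal_eval {R X κ : Type*} [Ring R] [NoZeroDivisors R]
    {v : κ → X → R} (w : κ → X) (hdiag : ∀ i, v i (w i) ≠ 0)
    (hoff : ∀ i j, j ≠ i → v j (w i) = 0) : LinearIndependent R v := by
  rw [linearIndependent_iff']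
  intro s g hsum i hi
  have heval := congrFun hsum (w i)
  simp only [Finset.sum_apply, Pi.smul_apply, smul_eq_mul, Pi.zero_apply] at heval
  rw [sum_eq_single i (fun j _ hji => by rw [hoff i j hji, mul_zero]) (absurd hi)] at heval
  exact (mul_eq_zero.1 heval).resolve_right (hdiag i)

theorem card_filter_card_le_le_sum_pow {α : Type*} [Fintype α] (r : ℕ) :
    #{S : Finset α | #S ≤ r} ≤ ∑ k ∈ range (r + 1), Fintype.card α ^ k := by
  classical
  have hcover : ({S : Finset α | #S ≤ r} : Finset (Finset α)) ⊆
      (range (r + 1)).biUnion (powersetCard · univ) := by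
    intro S hS
    simp only [mem_filter, mem_univ, true_and] at hS
    exact mem_biUnion.2 ⟨#S, mem_range.2 (Nat.lt_succ_of_le hS), mem_powersetCard_univ.2 rfl⟩
  calc #{S : Finset α | #S ≤ r} ≤ #((range (r + 1)).biUnion (powersetCard · univ)) :=
        card_le_card hcover
    _ ≤ ∑ k ∈ range (r + 1), #(powersetCard k (univ : Finset α)) := card_biUnion_le
    _ ≤ ∑ k ∈ range (r + 1), Fintype.card α ^ k := by
        gcongr with k
        rw [card_powersetCard, card_univ]
        exact Nat.choose_le_pow _ _

theorem sum_range_succ_pow_le_two_mul_pow {x : ℕ} (hx : 2 ≤ x) (r : ℕ) :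
    ∑ k ∈ range (r + 1), x ^ k ≤ 2 * x ^ r := by
  rw [sum_range_succ, two_mul]
  exact Nat.add_le_add_right (Nat.geomSum_lt hx fun _ => mem_range.1).le _

section NaeSat

variable {ι : Type*}

def NaeSat (a : ι → Bool) (C : Finset (ι × Bool)) : Prop :=
  (∃ l ∈ C, a l.1 = l.2) ∧ (∃ l ∈ C, a l.1 ≠ l.2)

def NaeSatisfiable (F : Finset (Finset (ι × Bool))) : Prop :=
  ∃ a : ι → Bool, ∀ C ∈ F, NaeSat a C

theorem naeSat_iff_card_filter {a : ι → Bool} {C : Finset (ι × Bool)} :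
    NaeSat a C ↔ 0 < #{l ∈ C | a l.1 = l.2} ∧ #{l ∈ C | a l.1 = l.2} < #C := by
  rw [card_pos, filter_nonempty_iff, (card_filter_le _ _).lt_iff_ne, Ne, card_filter_eq_iff,
    not_forall₂]
  simp only [NaeSat, exists_prop, ne_eq]

theorem exists_not_naeSat_of_minimal {G : Finset (Finset (ι × Bool))}
    (hG : Minimal (fun G => ¬NaeSatisfiable G) G) {C : Finset (ι × Bool)} (hC : C ∈ G) :
    ∃ a : ι → Bool, ¬NaeSat a C ∧ ∀ D ∈ G, D ≠ C → NaeSat a D := by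
  classical
  obtain ⟨a, ha⟩ := not_not.1 (hG.not_prop_of_lt (erase_ssubset hC))
  have hother : ∀ D ∈ G, D ≠ C → NaeSat a D := fun D hD hDC => ha D (mem_erase.2 ⟨hDC, hD⟩)
  refine ⟨a, fun haC => hG.prop ⟨a, fun D hD => ?_⟩, hother⟩
  by_cases hDC : D = C
  · exact hDC ▸ haC
  · exact hother D hD hDC

end NaeSat

section LowDegree

variable {ι : Type*}

def litIndicator (l : ι × Bool) : (ι → Bool) → ℝ := fun a => if a l.1 = l.2 then 1 else 0

def litMonomial (S : Finset (ι × Bool)) : (ι → Bool) → ℝ := ∏ l ∈ S, litIndicator l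

theorem litMonomial_apply (S : Finset (ι × Bool)) (a : ι → Bool) :
    litMonomial S a = if ∀ l ∈ S, a l.1 = l.2 then 1 else 0 := by
  simp only [litMonomial, prod_apply, litIndicator, prod_boole]

theorem litMonomial_union [DecidableEq ι] (S T : Finset (ι × Bool)) :
    litMonomial (S ∪ T) = litMonomial S * litMonomial T := by
  ext a
  simp only [Pi.mul_apply, litMonomial_apply, forall_mem_union, ite_zero_mul_ite_zero, mul_one]

variable (ι) in
def lowDegSpan (r : ℕ) : Submodule ℝ ((ι → Bool) → ℝ) :=
  Submodule.span ℝ (litMonomial '' {S | #S ≤ r})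

theorem litMonomial_mem_lowDegSpan {r : ℕ} {S : Finset (ι × Bool)} (hS : #S ≤ r) :
    litMonomial S ∈ lowDegSpan ι r :=
  Submodule.subset_span ⟨S, hS, rfl⟩

theorem lowDegSpan_mono {r s : ℕ} (h : r ≤ s) : lowDegSpan ι r ≤ lowDegSpan ι s :=
  Submodule.span_mono (Set.image_mono fun _ hS => le_trans hS h)

theorem lowDegSpan_mul_le (r s : ℕ) :
    lowDegSpan ι r * lowDegSpan ι s ≤ lowDegSpan ι (r + s) := by
  classical
  rw [lowDegSpan, lowDegSpan, Submodule.span_mul_span, Submodule.span_le, Set.mul_subset_iff]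
  rintro _ ⟨S, hS, rfl⟩ _ ⟨T, hT, rfl⟩
  rw [SetLike.mem_coe, ← litMonomial_union]
  exact litMonomial_mem_lowDegSpan ((card_union_le S T).trans (add_le_add hS hT))

theorem one_mem_lowDegSpan : (1 : (ι → Bool) → ℝ) ∈ lowDegSpan ι 0 :=
  litMonomial_mem_lowDegSpan (S := ∅) le_rfl

theorem natCast_mem_lowDegSpan (k : ℕ) : (k : (ι → Bool) → ℝ) ∈ lowDegSpan ι 0 := by
  rw [← nsmul_one]
  exact Submodule.smul_of_tower_mem _ k one_mem_lowDegSpan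

theorem prod_mem_lowDegSpan {κ : Type*} (s : Finset κ) {f : κ → (ι → Bool) → ℝ}
    (hf : ∀ t ∈ s, f t ∈ lowDegSpan ι 1) : ∏ t ∈ s, f t ∈ lowDegSpan ι #s := by
  induction s using Finset.cons_induction with
  | empty => exact one_mem_lowDegSpan
  | cons t s ht ih =>
    rw [prod_cons, card_cons, add_comm]
    exact lowDegSpan_mul_le 1 #s <| Submodule.mul_mem_mul (hf t (mem_cons_self t s))
      (ih fun u hu => hf u (mem_cons_of_mem hu))

theorem finrank_lowDegSpan_le [Fintype ι] (r : ℕ) :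
    Module.finrank ℝ (lowDegSpan ι r) ≤ #{S : Finset (ι × Bool) | #S ≤ r} := by
  rw [lowDegSpan, Set.image_eq_range]
  exact (finrank_range_le_card _).trans_eq (Fintype.card_subtype _)

end LowDegree

section ClausePoly

variable {ι : Type*}

def trueCount (C : Finset (ι × Bool)) : (ι → Bool) → ℝ := ∑ l ∈ C, litIndicator l

theorem trueCount_apply (C : Finset (ι × Bool)) (a : ι → Bool) :
    trueCount C a = #{l ∈ C | a l.1 = l.2} := by
  simp only [trueCount, Finset.sum_apply, litIndicator, sum_boole]

theorem trueCount_mem_lowDegSpan (C : Finset (ι × Bool)) : trueCount C ∈ lowDegSpan ι 1 :=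
  Submodule.sum_mem _ fun l _ =>
    prod_singleton litIndicator l ▸ litMonomial_mem_lowDegSpan (card_singleton l).le

def clausePoly (C : Finset (ι × Bool)) : (ι → Bool) → ℝ := ∏ k ∈ Ico 1 #C, (trueCount C - k)

theorem clausePoly_apply_eq_zero_iff {C : Finset (ι × Bool)} {a : ι → Bool} :
    clausePoly C a = 0 ↔ NaeSat a C := by
  simp only [clausePoly, prod_apply, Pi.sub_apply, Pi.natCast_apply, trueCount_apply,
    prod_eq_zero_iff, sub_eq_zero, Nat.cast_inj, exists_eq_right', mem_Ico,
    naeSat_iff_card_filter, Nat.one_le_iff_ne_zero, Nat.pos_iff_ne_zero]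

theorem clausePoly_mem_lowDegSpan (C : Finset (ι × Bool)) :
    clausePoly C ∈ lowDegSpan ι (#C - 1) := by
  rw [← Nat.card_Ico 1 #C]
  exact prod_mem_lowDegSpan (Ico 1 #C) fun k _ =>
    Submodule.sub_mem _ (trueCount_mem_lowDegSpan C)
      (lowDegSpan_mono zero_le_one (natCast_mem_lowDegSpan k))

end ClausePoly

theorem card_le_of_minimal_not_naeSatisfiable {ι : Type*} [Fintype ι]
    {G : Finset (Finset (ι × Bool))} (hG : Minimal (fun G => ¬NaeSatisfiable G) G) {r : ℕ}
    (hr : ∀ C ∈ G, #C ≤ r + 1) : #G ≤ #{S : Finset (ι × Bool) | #S ≤ r} := by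
  classical
  choose! w hw using fun C (hC : C ∈ G) => exists_not_naeSat_of_minimal hG hC
  have hli : LinearIndependent ℝ fun C : G => clausePoly C.1 :=
    linearIndependent_of_diagonal_eval (fun C => w C)
      (fun C => clausePoly_apply_eq_zero_iff.not.2 (hw C C.2).1)
      (fun C D hDC => clausePoly_apply_eq_zero_iff.2
        ((hw C C.2).2 D D.2 (Subtype.coe_ne_coe.2 hDC)))
  have hspan : Submodule.span ℝ (Set.range fun C : G => clausePoly C.1) ≤ lowDegSpan ι r :=
    Submodule.span_le.2 <| Set.range_subset_iff.2 fun C =>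
      lowDegSpan_mono (Nat.sub_le_of_le_add (hr C C.2)) (clausePoly_mem_lowDegSpan C.1)
  calc #G = Module.finrank ℝ (Submodule.span ℝ (Set.range fun C : G => clausePoly C.1)) := by
        rw [finrank_span_eq_card hli, Fintype.card_coe]
    _ ≤ Module.finrank ℝ (lowDegSpan ι r) := Submodule.finrank_mono hspan
    _ ≤ #{S : Finset (ι × Bool) | #S ≤ r} := finrank_lowDegSpan_le r

theorem naeSat_kernel_general {ι : Type} [Fintype ι] (d n : ℕ)
    (hd : 1 ≤ d) (hn : Fintype.card ι = n) (hdn : d ≤ 2 * n)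
    (F : Finset (Finset (ι × Bool)))
    (hF : ∀ C ∈ F, C.Nonempty ∧ C.card ≤ d) :
    ∃ F' ⊆ F, F'.card ≤ 2 * (2 * n) ^ (d - 1) ∧
      ((∃ a : ι → Bool, ∀ C ∈ F',
          (∃ l ∈ C, a l.1 = l.2) ∧ (∃ l ∈ C, a l.1 ≠ l.2)) ↔
        (∃ a : ι → Bool, ∀ C ∈ F,
          (∃ l ∈ C, a l.1 = l.2) ∧ (∃ l ∈ C, a l.1 ≠ l.2))) := by
  by_cases hsat : NaeSatisfiable F
  · exact ⟨∅, empty_subset F, by simp, fun _ => hsat, fun _ => ⟨fun _ => true, by simp⟩⟩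
  obtain ⟨G, hGF, hG⟩ := exists_minimal_le_of_wellFoundedLT (fun G => ¬NaeSatisfiable G) F hsat
  refine ⟨G, hGF, ?_, iff_of_false hG.prop hsat⟩
  have hlits : Fintype.card (ι × Bool) = 2 * n := by simp [hn, mul_comm]
  calc #G ≤ #{S : Finset (ι × Bool) | #S ≤ d - 1} :=
        card_le_of_minimal_not_naeSatisfiable hG fun C hC => by
          have := (hF C (hGF hC)).2
          omega
    _ ≤ ∑ k ∈ range (d - 1 + 1), (2 * n) ^ k := hlits ▸ card_filter_card_le_le_sum_pow (d - 1)
    _ ≤ 2 * (2 * n) ^ (d - 1) := sum_range_succ_pow_le_two_mul_pow (by omega) (d - 1)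

theorem naeSat_kernel {ι : Type} [Fintype ι] [DecidableEq ι] (d n : ℕ)
    (hd : 1 ≤ d) (hn : Fintype.card ι = n) (hdn : d ≤ 2 * n)
    (F : Finset (Finset (ι × Bool)))
    (hF : ∀ C ∈ F, C.Nonempty ∧ C.card ≤ d) :
    ∃ F' ⊆ F, F'.card ≤ 2 * (2 * n) ^ (d - 1) ∧
      ((∃ a : ι → Bool, ∀ C ∈ F',
          (∃ l ∈ C, a l.1 = l.2) ∧ (∃ l ∈ C, a l.1 ≠ l.2)) ↔
        (∃ a : ι → Bool, ∀ C ∈ F,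
          (∃ l ∈ C, a l.1 = l.2) ∧ (∃ l ∈ C, a l.1 ≠ l.2))) :=
  naeSat_kernel_general d n hd hn hdn F hF
end

section
/- Let F be a finite set of clauses over a finite set of variables ι, where each clause is a finite set of literals and a literal is a pair (i, b) with i ∈ ι and b a Boolean. Introduce one fresh variable y not in ι, and let F' be the set of clauses over ι ∪ {y} obtained from F by adding the positive literal (y, true) to every clause. Then F is satisfiable (in the usual CNF sense: some assignment makes at least one literal of every clause evaluate to true) if and only if F' is NAE-satisfiable. -/
theorem sat_iff_naeSat_with_fresh_variable {ι : Type} [Fintype ι]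
    [DecidableEq ι] (F : Finset (Finset (ι × Bool))) :
    (∃ a : ι → Bool, ∀ C ∈ F, ∃ l ∈ C, a l.1 = l.2) ↔
    (∃ a : Option ι → Bool,
      ∀ C ∈ F.image (fun C : Finset (ι × Bool) =>
          insert ((none : Option ι), true)
            (C.image (fun l : ι × Bool => ((some l.1 : Option ι), l.2)))),
        (∃ l ∈ C, a l.1 = l.2) ∧ (∃ l ∈ C, a l.1 ≠ l.2)) := by
  constructor
  · rintro ⟨a, ha⟩
    refine ⟨fun o => o.elim false a, ?_⟩
    intro C' hC'
    simp only [Finset.mem_image] at hC'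
    obtain ⟨C, hC, rfl⟩ := hC'
    obtain ⟨l, hl, hal⟩ := ha C hC
    constructor
    · exact ⟨(some l.1, l.2), Finset.mem_insert_of_mem
        (Finset.mem_image_of_mem _ hl), hal⟩
    · refine ⟨(none, true), Finset.mem_insert_self _ _, ?_⟩
      simp
  · rintro ⟨a, ha⟩
    by_cases h : a none = true
    · refine ⟨fun i => !a (some i), ?_⟩
      intro C hC
      obtain ⟨_, ⟨l', hl', hne⟩⟩ := ha _ (Finset.mem_image_of_mem _ hC)
      rcases Finset.mem_insert.mp hl' with rfl | hm
      · exact absurd h hne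
      · simp only [Finset.mem_image] at hm
        obtain ⟨l, hl, rfl⟩ := hm
        refine ⟨l, hl, ?_⟩
        simp only at hne ⊢
        cases hb : a (some l.1) <;> cases hb2 : l.2 <;> simp_all
    · refine ⟨fun i => a (some i), ?_⟩
      intro C hC
      obtain ⟨⟨l', hl', heq⟩, _⟩ := ha _ (Finset.mem_image_of_mem _ hC)
      rcases Finset.mem_insert.mp hl' with rfl | hm
      · exact absurd heq h
      · simp only [Finset.mem_image] at hm
        obtain ⟨l, hl, rfl⟩ := hm
        exact ⟨l, hl, heq⟩
end
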